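/- arXiv:1311.5533 — 10 statements merged into one kernel-verified Lean document; each statement's English description precedes it below -/
import Mathlib

section
/- Let R = {α₁,…,α_k} be a finite multiset of real numbers with 1 = α₁ ≤ α₂ ≤ … ≤ α_k, and let S(R)_j denote the j-th element of the monotone increasing rearrangement of the multiset consisting of k zeros and two copies of each αᵢℕ. Then limsup_{j→∞} (S(R)_{j+1} − S(R)_j) = 1. -/
/-!
Every positive integer is a term of `S`, so consecutive terms differ by at most `1`.
Conversely, recurrence of `n ↦ n • 1` in the compact torus `∏ ℝ ⧸ α_i ℤ` gives arbitrarily large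
integers `N` within `ε / 2` of a multiple of every `α_i`. Since `α_i ≥ 1`, no term of `S` then
lies in `(N + ε / 2, N + 1 - ε / 2)`, which forces a gap of length at least `1 - ε` beyond any
given index.
-/

open Filter Topology

noncomputable section

/-- Value map for the multiset consisting of `k` zeros together with two copies of
`α i * ℕ⁺` for each `i`. -/
def sval {k : ℕ} (α : Fin k → ℝ) : (Fin k ⊕ (Fin k × ℕ+ × Fin 2)) → ℝ
  | .inl _ => 0
  | .inr (i, n, _) => (n : ℝ) * α i

/-- `S` is the monotone increasing rearrangement of the multiset of `k` zeros together
with two copies of each `α i * ℕ⁺`. -/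
def IsSEnum {k : ℕ} (α : Fin k → ℝ) (S : ℕ → ℝ) : Prop :=
  Monotone S ∧ ∃ e : ℕ ≃ (Fin k ⊕ (Fin k × ℕ+ × Fin 2)), ∀ j, S j = sval α (e j)

/-- `F` (mapping the `j`-th element of the multiset enumerated by `S` to the `F j`-th
element of the multiset enumerated by `A`) is close: for each `ε > 0` only finitely
many elements move by at least `ε`. -/
def CloseSeq (S A : ℕ → ℝ) (F : ℕ → ℕ) : Prop :=
  ∀ ε > 0, {j : ℕ | ε ≤ |A (F j) - S j|}.Finite

/-- `F` is an almost-bijection: all but finitely many targets have exactly one preimage. -/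
def AlmostBij (F : ℕ → ℕ) : Prop := {n : ℕ | ¬ ∃! j : ℕ, F j = n}.Finite

open Set

lemma frequently_norm_nsmul_lt {G : Type*} [SeminormedAddCommGroup G] [CompactSpace G] (x : G)
    {δ : ℝ} (hδ : 0 < δ) : ∃ᶠ n : ℕ in atTop, ‖n • x‖ < δ := by
  -- Along a convergent subsequence `φ`, the differences `φ b - φ a` of late indices work.
  obtain ⟨_, φ, hφ, hlim⟩ := CompactSpace.tendsto_subseq fun n : ℕ => n • x
  obtain ⟨A, hA⟩ := Metric.cauchySeq_iff'.1 hlim.cauchySeq δ hδ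
  refine frequently_atTop.2 fun M => ⟨φ (M + A) - φ A, ?_, ?_⟩
  · have := hφ.add_le_nat M A
    omega
  · rw [sub_nsmul _ (hφ.monotone (Nat.le_add_left A M)), ← sub_eq_add_neg, ← dist_eq_norm]
    exact hA _ (Nat.le_add_left A M)

lemma frequently_forall_exists_int_abs_sub_mul_lt {ι : Type*} [Fintype ι] (α : ι → ℝ)
    (hα : ∀ i, 0 < α i) {η : ℝ} (hη : 0 < η) :
    ∃ᶠ N : ℕ in atTop, ∀ i, ∃ q : ℤ, |N - q * α i| < η := by
  have : ∀ i, Fact (0 < α i) := fun i => ⟨hα i⟩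
  refine (frequently_norm_nsmul_lt (fun i => ((1 : ℝ) : AddCircle (α i))) hη).mono
    fun N hN i => ⟨round ((α i)⁻¹ * N), ?_⟩
  have := (pi_norm_lt_iff hη).1 hN i
  rwa [Pi.smul_apply, ← AddCircle.coe_nsmul, nsmul_one, AddCircle.norm_eq] at this

lemma mul_notMem_Ioo {a N η : ℝ} {q : ℤ} (ha : 1 ≤ a) (hq : |N - q * a| < η) (m : ℤ) :
    m * a ∉ Ioo (N + η) (N + 1 - η) := by
  rintro ⟨hlo, hhi⟩
  rw [abs_sub_lt_iff] at hq
  rcases le_or_gt m q with hmq | hmq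
  · have : (m : ℝ) * a ≤ q * a := by gcongr
    linarith
  · have : (q : ℝ) + 1 ≤ m := by exact_mod_cast hmq
    nlinarith

lemma Monotone.exists_le_lt_succ {β : Type*} [LinearOrder β] {S : ℕ → β} (hS : Monotone S)
    {i : ℕ} {a : β} (hi : S i ≤ a) (h : ∃ n, a < S n) : ∃ j ≥ i, S j ≤ a ∧ a < S (j + 1) := by
  classical
  have hfind : i < Nat.find h := hS.reflect_lt (hi.trans_lt (Nat.find_spec h))
  obtain ⟨j, hj⟩ := Nat.exists_eq_add_of_lt hfind
  refine ⟨i + j, by omega, not_lt.1 (Nat.find_min h (by omega)), ?_⟩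
  rw [show i + j + 1 = Nat.find h by omega]
  exact Nat.find_spec h

lemma limsup_eq_of_le_of_frequently_ge {ι : Type*} {f : Filter ι} [f.NeBot] {u : ι → ℝ} {c : ℝ}
    (hb : IsBoundedUnder (· ≥ ·) f u) (hu : ∀ᶠ j in f, u j ≤ c)
    (hfreq : ∀ ε > 0, ∃ᶠ j in f, c - ε ≤ u j) : limsup u f = c := by
  refine le_antisymm (limsup_le_of_le hb.isCoboundedUnder_le hu)
    (le_of_forall_sub_le fun ε hε => ?_)
  exact le_limsup_of_frequently_le (hfreq ε hε) (isBoundedUnder_of_eventually_le hu)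

namespace IsSEnum

variable {k : ℕ} {α : Fin k → ℝ} {S : ℕ → ℝ}

lemma eq_zero_or_eq_mul (hS : IsSEnum α S) (j : ℕ) : S j = 0 ∨ ∃ i, ∃ m : ℕ+, S j = m * α i := by
  obtain ⟨-, e, hSe⟩ := hS
  rw [hSe]
  rcases e j with i | ⟨i, m, t⟩
  exacts [Or.inl rfl, Or.inr ⟨i, m, rfl⟩]

lemma nonneg (hS : IsSEnum α S) (hα : ∀ i, 0 ≤ α i) (j : ℕ) : 0 ≤ S j := by
  rcases hS.eq_zero_or_eq_mul j with h | ⟨i, m, h⟩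
  · exact h.ge
  · rw [h]; exact mul_nonneg m.val.cast_nonneg (hα i)

lemma exists_eq_natCast_add_one (hS : IsSEnum α S) {i : Fin k} (hi : α i = 1) (n : ℕ) :
    ∃ j, S j = n + 1 := by
  obtain ⟨-, e, hSe⟩ := hS
  refine ⟨e.symm (.inr (i, n.succPNat, 0)), ?_⟩
  rw [hSe, Equiv.apply_symm_apply]
  simp [sval, hi]

lemma exists_gt (hS : IsSEnum α S) {i : Fin k} (hi : α i = 1) (a : ℝ) : ∃ j, a < S j := by
  obtain ⟨j, hj⟩ := hS.exists_eq_natCast_add_one hi ⌈a⌉₊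
  exact ⟨j, hj ▸ (Nat.le_ceil a).trans_lt (lt_add_one _)⟩

lemma sub_le_one (hS : IsSEnum α S) (hα : ∀ i, 0 ≤ α i) {i : Fin k} (hi : α i = 1) (j : ℕ) :
    S (j + 1) - S j ≤ 1 := by
  obtain ⟨j', hj'⟩ := hS.exists_eq_natCast_add_one hi ⌊S j⌋₊
  have hfloor := Nat.floor_le (hS.nonneg hα j)
  have hlt : S j < S j' := hj' ▸ Nat.lt_floor_add_one _
  have := hS.1 (hS.1.reflect_lt hlt)
  linarith

lemma frequently_one_sub_le_sub (hS : IsSEnum α S) (hle : ∀ i, 1 ≤ α i) {i : Fin k}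
    (hi : α i = 1) {ε : ℝ} (hε : 0 < ε) : ∃ᶠ j in atTop, 1 - ε ≤ S (j + 1) - S j := by
  refine frequently_atTop.2 fun J => ?_
  obtain ⟨N, hJN, hN⟩ := (frequently_forall_exists_int_abs_sub_mul_lt α
    (fun i => one_pos.trans_le (hle i)) (half_pos hε)).forall_exists_of_atTop ⌈S J⌉₊
  have hgap : ∀ j, S j ∉ Ioo (N + ε / 2) (N + 1 - ε / 2) := by
    intro j
    rcases hS.eq_zero_or_eq_mul j with h | ⟨i, m, h⟩
    · rw [h]
      exact fun h' => by linarith [h'.1, N.cast_nonneg (α := ℝ)]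
    · obtain ⟨q, hq⟩ := hN i
      rw [h]
      exact_mod_cast mul_notMem_Ioo (hle i) hq m
  have hJ : S J ≤ N + ε / 2 := by
    have : (⌈S J⌉₊ : ℝ) ≤ N := by exact_mod_cast hJN
    linarith [Nat.le_ceil (S J)]
  obtain ⟨j, hjJ, hj, hj1⟩ := hS.1.exists_le_lt_succ hJ (hS.exists_gt hi _)
  have : N + 1 - ε / 2 ≤ S (j + 1) := not_lt.1 fun h => hgap (j + 1) ⟨hj1, h⟩
  exact ⟨j, hjJ, by linarith⟩

end IsSEnum

theorem stmt2 {k : ℕ} (α : Fin k → ℝ) (hle : ∀ i, 1 ≤ α i) (h1 : ∃ i, α i = 1)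
    (S : ℕ → ℝ) (hS : IsSEnum α S) :
    limsup (fun j => S (j + 1) - S j) atTop = 1 := by
  obtain ⟨i, hi⟩ := h1
  have hα : ∀ i, 0 ≤ α i := fun i => zero_le_one.trans (hle i)
  refine limsup_eq_of_le_of_frequently_ge ?_ (.of_forall (hS.sub_le_one hα hi))
    fun ε hε => hS.frequently_one_sub_le_sub hle hi hε
  exact isBoundedUnder_of ⟨0, fun j => sub_nonneg.2 (hS.1 j.le_succ)⟩
end
end

section
/- Let A and B be monotone increasing sequences of nonnegative reals tending to infinity, and suppose F : ℕ → ℕ is a bijection (viewed as mapping the j-th element of A to the F(j)-th element of B) such that A_j − B_{F(j)} → 0 as j → ∞. Then limsup_{j→∞}(A_{j+1} − A_j) = limsup_{j→∞}(B_{j+1} − B_j). -/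
/-!
Matching the `j`-th element of `A` with the `F j`-th element of `B` costs at most `ε` from
some point on. If nevertheless `A j - B j ≥ ε` for a large `j`, then every element among
`B 0, …, B j` would be matched with an element of `A` of index below `j`: a map from `j + 1`
indices into `j` that is injective, which is absurd. Hence `A j - B j → 0`, so the consecutive
gaps of `A` and `B` differ by a null sequence and have the same limsup (also when it takes
its junk value `0`, since the sets of eventual upper bounds are `ε`-translates of each other).
-/

open Filter Topology

noncomputable section

lemma Real.sInf_le_sInf_of_forall_add_mem {S T : Set ℝ} (hS : S.Nonempty) (hT : BddBelow T)
    (h : ∀ ε > 0, ∀ a ∈ S, a + ε ∈ T) : sInf T ≤ sInf S :=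
  le_of_forall_pos_le_add fun ε hε => by
    have : sInf T - ε ≤ sInf S := le_csInf hS fun a ha => by
      linarith [csInf_le hT (h ε hε a ha)]
    linarith

lemma Real.sInf_eq_of_forall_add_mem {S T : Set ℝ}
    (hST : ∀ ε > 0, ∀ a ∈ S, a + ε ∈ T) (hTS : ∀ ε > 0, ∀ a ∈ T, a + ε ∈ S) :
    sInf S = sInf T := by
  rcases S.eq_empty_or_nonempty with rfl | hS
  · have hT : T = ∅ := Set.eq_empty_of_forall_notMem fun a ha => hTS 1 one_pos a ha
    rw [hT]
  have hT : T.Nonempty := hS.elim fun a ha => ⟨a + 1, hST 1 one_pos a ha⟩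
  by_cases hSb : BddBelow S
  · have hTb : BddBelow T := hSb.elim fun b hb => ⟨b - 1, fun a ha => by
      linarith [hb (hTS 1 one_pos a ha)]⟩
    exact le_antisymm (Real.sInf_le_sInf_of_forall_add_mem hT hSb hTS)
      (Real.sInf_le_sInf_of_forall_add_mem hS hTb hST)
  · have hTb : ¬BddBelow T := fun ⟨b, hb⟩ => hSb ⟨b - 1, fun a ha => by
      linarith [hb (hST 1 one_pos a ha)]⟩
    rw [Real.sInf_of_not_bddBelow hSb, Real.sInf_of_not_bddBelow hTb]

lemma Real.limsup_eq_of_tendsto_sub_nhds_zero {ι : Type*} {f : Filter ι} {u v : ι → ℝ}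
    (h : Tendsto (u - v) f (𝓝 0)) : limsup u f = limsup v f := by
  have bound_shift : ∀ {u v : ι → ℝ}, Tendsto (u - v) f (𝓝 0) →
      ∀ ε > 0, ∀ a ∈ {a | ∀ᶠ n in f, u n ≤ a}, a + ε ∈ {a | ∀ᶠ n in f, v n ≤ a} :=
    fun h ε hε a ha => (ha.and ((tendsto_order.1 h).1 (-ε) (neg_lt_zero.2 hε))).mono
      fun n ⟨hu, huv⟩ => by simp only [Pi.sub_apply] at huv; linarith
  rw [limsup_eq, limsup_eq]
  have h' : Tendsto (v - u) f (𝓝 0) := by rw [← neg_sub, ← neg_zero]; exact h.neg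
  exact Real.sInf_eq_of_forall_add_mem (bound_shift h) (bound_shift h')

section Matching

variable {A B : ℕ → ℝ}

lemma eventually_sub_lt_of_equiv (hA : Monotone A) (hB : Monotone B) (e : ℕ ≃ ℕ) {ε : ℝ}
    (h : ∀ᶠ i in atTop, A i - B (e i) < ε) : ∀ᶠ j in atTop, A j - B j < ε := by
  obtain ⟨N, hN⟩ := eventually_atTop.1 h
  refine eventually_atTop.2 ⟨N, fun j hj => ?_⟩
  by_contra! hj_far
  have hmaps : Set.MapsTo e.symm (Finset.range (j + 1)) (Finset.range j) := by
    intro m hm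
    simp only [Finset.coe_range, Set.mem_Iio] at hm ⊢
    by_contra! hjm
    have hmatch : A (e.symm m) - B m < ε := by simpa using hN (e.symm m) (hj.trans hjm)
    linarith [hA hjm, hB (Nat.lt_succ_iff.1 hm)]
  simpa using Finset.card_le_card_of_injOn e.symm hmaps e.symm.injective.injOn

lemma tendsto_sub_nhds_zero_of_equiv (hA : Monotone A) (hB : Monotone B) (e : ℕ ≃ ℕ)
    (h : Tendsto (fun j => A j - B (e j)) atTop (𝓝 0)) :
    Tendsto (fun j => A j - B j) atTop (𝓝 0) := by
  have he : Tendsto e.symm atTop atTop := e.symm.injective.nat_tendsto_atTop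
  refine tendsto_order.2 ⟨fun a ha => ?_, fun a ha =>
    eventually_sub_lt_of_equiv hA hB e ((tendsto_order.1 h).2 a ha)⟩
  have hBA : ∀ᶠ m in atTop, B m - A (e.symm m) < -a :=
    (he.eventually ((tendsto_order.1 h).1 a ha)).mono fun m hm => by rw [e.apply_symm_apply] at hm; linarith
  exact (eventually_sub_lt_of_equiv hB hA e.symm hBA).mono fun j hj => by linarith

end Matching

theorem stmt3_general (A B : ℕ → ℝ) (hA : Monotone A) (hB : Monotone B)
    (F : ℕ ≃ ℕ) (hF : Tendsto (fun j => A j - B (F j)) atTop (nhds 0)) :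
    limsup (fun j => A (j + 1) - A j) atTop = limsup (fun j => B (j + 1) - B j) atTop := by
  have hAB := tendsto_sub_nhds_zero_of_equiv hA hB F hF
  apply Real.limsup_eq_of_tendsto_sub_nhds_zero
  convert (hAB.comp (tendsto_add_atTop_nat 1)).sub hAB using 1
  · ext j
    simp only [Pi.sub_apply, Function.comp_apply]
    ring
  · simp

theorem stmt3 (A B : ℕ → ℝ) (hA : Monotone A) (hB : Monotone B)
    (hA0 : ∀ j, 0 ≤ A j) (hB0 : ∀ j, 0 ≤ B j)
    (hAt : Tendsto A atTop atTop) (hBt : Tendsto B atTop atTop)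
    (F : ℕ ≃ ℕ) (hF : Tendsto (fun j => A j - B (F j)) atTop (nhds 0)) :
    limsup (fun j => A (j + 1) - A j) atTop = limsup (fun j => B (j + 1) - B j) atTop :=
  stmt3_general A B hA hB F hF
end
end

section
/- Let R be a finite multiset of positive real numbers and A a countable multiset of nonnegative reals (identified with its monotone increasing enumeration) such that there exists a close almost-bijection F : S(R) → A. Then min R = limsup_{j→∞}(A_{j+1} − A_j). -/
open Filter Topology

noncomputable section

lemma dirichlet_aux {k : ℕ} (β : Fin k → ℝ) {δ : ℝ} (hδ : 0 < δ) (N : ℕ) :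
    ∃ n : ℕ, N ≤ n ∧ 1 ≤ n ∧ ∀ i, ∃ m : ℤ, |(n : ℝ) * β i - m| ≤ δ := by
  have key : ∀ δ' : ℝ, 0 < δ' → ∃ n : ℕ, 1 ≤ n ∧ ∀ i, ∃ m : ℤ, |(n : ℝ) * β i - m| ≤ δ' := by
    intro δ' hδ'
    obtain ⟨M, hM⟩ := exists_nat_gt (1 / δ')
    have hM0 : 0 < M := by
      have h : (0:ℝ) < M := lt_of_le_of_lt (by positivity) hM
      exact_mod_cast h
    have hM0' : (0:ℝ) < M := by exact_mod_cast hM0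
    have hfr : ∀ (a : ℕ) (i : Fin k), ⌊Int.fract ((a : ℝ) * β i) * M⌋.toNat < M := by
      intro a i
      have h1 : Int.fract ((a : ℝ) * β i) * M < M := by
        nlinarith [Int.fract_lt_one ((a : ℝ) * β i), Int.fract_nonneg ((a : ℝ) * β i)]
      have h2 : (⌊Int.fract ((a : ℝ) * β i) * M⌋ : ℤ) < M := by
        have := Int.floor_lt.2 (by exact_mod_cast h1 : Int.fract ((a : ℝ) * β i) * M < ((M : ℤ) : ℝ))
        exact this
      omega
    have hcard : Fintype.card (Fin k → Fin M) < Fintype.card (Fin (M ^ k + 1)) := by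
      simp [Fintype.card_fun]
    obtain ⟨a, b, hab, hfab⟩ := Fintype.exists_ne_map_eq_of_card_lt
      (fun (a : Fin (M ^ k + 1)) => fun (i : Fin k) =>
        (⟨⌊Int.fract (((a : ℕ) : ℝ) * β i) * M⌋.toNat, hfr a i⟩ : Fin M)) hcard
    -- wlog a < b
    obtain ⟨c, d, hcd, hf⟩ : ∃ c d : Fin (M ^ k + 1), c < d ∧ ∀ i : Fin k,
        ⌊Int.fract (((c : ℕ) : ℝ) * β i) * M⌋ = ⌊Int.fract (((d : ℕ) : ℝ) * β i) * M⌋ := by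
      have hmk : ∀ i, (⌊Int.fract (((a : ℕ) : ℝ) * β i) * M⌋.toNat : ℕ)
          = ⌊Int.fract (((b : ℕ) : ℝ) * β i) * M⌋.toNat := fun i =>
        congrArg Fin.val (congrFun hfab i)
      have hflr : ∀ i, ⌊Int.fract (((a : ℕ) : ℝ) * β i) * M⌋
          = ⌊Int.fract (((b : ℕ) : ℝ) * β i) * M⌋ := by
        intro i
        have h1 : (0:ℤ) ≤ ⌊Int.fract (((a : ℕ) : ℝ) * β i) * M⌋ :=
          Int.floor_nonneg.2 (mul_nonneg (Int.fract_nonneg _) hM0'.le)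
        have h2 : (0:ℤ) ≤ ⌊Int.fract (((b : ℕ) : ℝ) * β i) * M⌋ :=
          Int.floor_nonneg.2 (mul_nonneg (Int.fract_nonneg _) hM0'.le)
        have := hmk i
        omega
      rcases hab.lt_or_gt with h | h
      · exact ⟨a, b, h, hflr⟩
      · exact ⟨b, a, h, fun i => (hflr i).symm⟩
    refine ⟨(d : ℕ) - (c : ℕ), by omega, ?_⟩
    intro i
    refine ⟨⌊((d : ℕ) : ℝ) * β i⌋ - ⌊((c : ℕ) : ℝ) * β i⌋, ?_⟩
    have hsub : (((d : ℕ) - (c : ℕ) : ℕ) : ℝ) = ((d : ℕ) : ℝ) - ((c : ℕ) : ℝ) := by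
      have : (c : ℕ) ≤ (d : ℕ) := le_of_lt hcd
      push_cast [this]
      ring
    have habs1 : |Int.fract (((d : ℕ) : ℝ) * β i) * M - Int.fract (((c : ℕ) : ℝ) * β i) * M| < 1 :=
      Int.abs_sub_lt_one_of_floor_eq_floor (hf i).symm
    have habs2 : |Int.fract (((d : ℕ) : ℝ) * β i) - Int.fract (((c : ℕ) : ℝ) * β i)| < 1 / M := by
      rw [lt_div_iff₀ hM0']
      calc |Int.fract (((d : ℕ) : ℝ) * β i) - Int.fract (((c : ℕ) : ℝ) * β i)| * M
          = |(Int.fract (((d : ℕ) : ℝ) * β i) - Int.fract (((c : ℕ) : ℝ) * β i)) * M| := by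
            rw [abs_mul, abs_of_pos hM0']
        _ = |Int.fract (((d : ℕ) : ℝ) * β i) * M - Int.fract (((c : ℕ) : ℝ) * β i) * M| := by
            ring_nf
        _ < 1 := habs1
    have heq : (((d : ℕ) - (c : ℕ) : ℕ) : ℝ) * β i
        - ((⌊((d : ℕ) : ℝ) * β i⌋ - ⌊((c : ℕ) : ℝ) * β i⌋ : ℤ) : ℝ)
        = Int.fract (((d : ℕ) : ℝ) * β i) - Int.fract (((c : ℕ) : ℝ) * β i) := by
      rw [hsub]
      unfold Int.fract
      push_cast
      ring
    rw [heq]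
    have h1M : 1 / (M : ℝ) ≤ δ' := by
      rw [div_le_iff₀ hM0']
      have := (div_lt_iff₀ hδ').1 hM
      nlinarith
    linarith [habs2]
  -- scaling step
  set T := max N 1 with hT
  have hT1 : 1 ≤ T := le_max_right _ _
  have hT0 : (0:ℝ) < T := by exact_mod_cast lt_of_lt_of_le one_pos hT1
  obtain ⟨n₀, hn₀1, hn₀⟩ := key (δ / T) (by positivity)
  refine ⟨T * n₀, ?_, ?_, ?_⟩
  · calc N ≤ T := le_max_left _ _
      _ ≤ T * n₀ := Nat.le_mul_of_pos_right _ (by omega)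
  · exact Nat.one_le_iff_ne_zero.2 (by positivity)
  · intro i
    obtain ⟨m, hm⟩ := hn₀ i
    refine ⟨T * m, ?_⟩
    have : ((T * n₀ : ℕ) : ℝ) * β i - ((T * m : ℤ) : ℝ) = T * (((n₀ : ℕ) : ℝ) * β i - m) := by
      push_cast; ring
    rw [this, abs_mul, abs_of_pos hT0]
    calc (T : ℝ) * |((n₀ : ℕ) : ℝ) * β i - m| ≤ T * (δ / T) :=
      mul_le_mul_of_nonneg_left hm (le_of_lt hT0)
      _ = δ := by field_simp

theorem stmt4 {k : ℕ} (α : Fin k → ℝ) (L : ℝ) (hL : 0 < L)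
    (hmin : ∀ i, L ≤ α i) (hLmem : ∃ i, α i = L)
    (S A : ℕ → ℝ) (hS : IsSEnum α S) (hA : Monotone A) (hA0 : ∀ j, 0 ≤ A j)
    (F : ℕ → ℕ) (hclose : CloseSeq S A F) (hab : AlmostBij F) :
    limsup (fun j => A (j + 1) - A j) atTop = L := by
  obtain ⟨hmono, e, hSe⟩ := hS
  obtain ⟨i₀, hi₀⟩ := hLmem
  have hα0 : ∀ i, 0 < α i := fun i => lt_of_lt_of_le hL (hmin i)
  -- S attains every positive multiple of L
  have hSmem : ∀ n : ℕ, 0 < n → ∃ j, S j = (n : ℝ) * L := by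
    intro n hn
    refine ⟨e.symm (.inr (i₀, ⟨n, hn⟩, 0)), ?_⟩
    rw [hSe, Equiv.apply_symm_apply]
    simp only [sval, hi₀]
    norm_num
  -- S is unbounded
  have hSub : ∀ C : ℝ, ∃ j, C < S j := by
    intro C
    obtain ⟨n, hn⟩ := exists_nat_gt (C / L)
    obtain ⟨j, hj⟩ := hSmem (n + 1) (Nat.succ_pos n)
    refine ⟨j, ?_⟩
    rw [hj]
    have h1 : C / L < ((n + 1 : ℕ) : ℝ) := by push_cast; linarith
    exact (div_lt_iff₀ hL).1 h1
  -- bounds over finite index sets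
  have hbdd : ∀ (g : ℕ → ℝ) (E : Set ℕ), E.Finite → ∃ C : ℝ, ∀ j ∈ E, g j ≤ C := by
    intro g E hE
    obtain ⟨C, hC⟩ := (hE.image g).bddAbove
    exact ⟨C, fun j hj => hC (Set.mem_image_of_mem g hj)⟩
  -- A is unbounded
  have hAub : ∀ C : ℝ, ∃ m, C < A m := by
    intro C
    obtain ⟨ME, hME⟩ := hbdd S _ (hclose 1 one_pos)
    obtain ⟨j, hj⟩ := hSub (max C ME + 1)
    have hjE : ¬ (1 ≤ |A (F j) - S j|) := by
      intro hmem
      have := hME j hmem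
      have := le_max_right C ME
      linarith
    have habs := abs_lt.1 (not_le.1 hjE)
    refine ⟨F j, ?_⟩
    have := le_max_left C ME
    linarith
  -- upper bound: gaps eventually ≤ L + ε
  have hub : ∀ ε : ℝ, 0 < ε → ∀ᶠ j in atTop, A (j + 1) - A j ≤ L + ε := by
    intro ε hε
    have hδ : 0 < ε / 3 := by positivity
    obtain ⟨ME, hME⟩ := hbdd S _ (hclose (ε / 3) hδ)
    obtain ⟨m₀, hm₀⟩ := hAub (max ME 0)
    filter_upwards [eventually_ge_atTop m₀] with j hj
    by_contra hgap
    push_neg at hgap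
    have hAj : max ME 0 < A j := lt_of_lt_of_le hm₀ (hA hj)
    have hMEj : ME < A j := lt_of_le_of_lt (le_max_left _ _) hAj
    have hAj0 : 0 ≤ A j := le_trans (le_max_right _ _) (le_of_lt hAj)
    obtain ⟨x, hxdef⟩ : ∃ x : ℝ, x = A j + ε / 3 := ⟨_, rfl⟩
    have hx0 : 0 < x := by rw [hxdef]; linarith
    have hxL : 0 ≤ x / L := div_nonneg (le_of_lt hx0) (le_of_lt hL)
    obtain ⟨n, hndef⟩ : ∃ n : ℕ, n = ⌊x / L⌋.toNat + 1 := ⟨_, rfl⟩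
    have hcast : ((⌊x / L⌋.toNat : ℕ) : ℝ) = ((⌊x / L⌋ : ℤ) : ℝ) := by
      exact_mod_cast Int.toNat_of_nonneg (Int.floor_nonneg.2 hxL)
    have hnx : x < (n : ℝ) * L := by
      have h1 : x / L < (⌊x / L⌋ : ℝ) + 1 := Int.lt_floor_add_one _
      have h2 : x / L < (n : ℝ) := by
        rw [hndef]; push_cast; rw [hcast]; linarith
      exact (div_lt_iff₀ hL).1 h2
    have hnx2 : (n : ℝ) * L ≤ x + L := by
      have h1 : (⌊x / L⌋ : ℝ) ≤ x / L := Int.floor_le _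
      have h2 : (n : ℝ) ≤ x / L + 1 := by
        rw [hndef]; push_cast; rw [hcast]; linarith
      have h3 : (n : ℝ) * L ≤ (x / L + 1) * L := mul_le_mul_of_nonneg_right h2 (le_of_lt hL)
      calc (n : ℝ) * L ≤ (x / L + 1) * L := h3
        _ = x + L := by field_simp
    obtain ⟨j', hj'⟩ := hSmem n (by omega)
    have hj'E : ¬ (ε / 3 ≤ |A (F j') - S j'|) := by
      intro hmem
      have h9 := hME j' hmem
      rw [hj'] at h9
      rw [hxdef] at hnx
      linarith
    have habs := abs_lt.1 (not_le.1 hj'E)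
    rw [hj'] at habs
    rw [hxdef] at hnx hnx2
    have hgt : A j < A (F j') := by linarith [habs.1]
    have hlt' : A (F j') < A (j + 1) := by linarith [habs.2]
    rcases le_or_gt (F j') j with h | h
    · exact absurd (hA h) (not_le.2 hgt)
    · exact absurd (hA (Nat.succ_le_of_lt h)) (not_le.2 hlt')
  -- lower bound: gaps frequently ≥ L - ε
  have hlb : ∀ ε : ℝ, 0 < ε → ∃ᶠ j in atTop, L - ε ≤ A (j + 1) - A j := by
    intro ε hε
    set δ := min (ε / 4) (L / 4) with hδdef
    have hδ : 0 < δ := lt_min (by positivity) (by positivity)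
    have hδε : 4 * δ ≤ ε := by
      have := min_le_left (ε / 4) (L / 4); linarith
    have hδL : 4 * δ ≤ L := by
      have := min_le_right (ε / 4) (L / 4); linarith
    set Csum := 1 + ∑ i, α i with hCsdef
    have hsum0 : 0 ≤ ∑ i, α i := Finset.sum_nonneg fun i _ => le_of_lt (hα0 i)
    have hCs0 : 0 < Csum := by rw [hCsdef]; linarith
    set δ' := δ / Csum with hδ'def
    have hδ' : 0 < δ' := div_pos hδ hCs0
    have hδ'α : ∀ i, δ' * α i ≤ δ := by
      intro i
      have h1 : α i ≤ Csum := by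
        have := Finset.single_le_sum (f := α) (fun i _ => le_of_lt (hα0 i)) (Finset.mem_univ i)
        rw [hCsdef]; linarith
      calc δ' * α i ≤ δ' * Csum := mul_le_mul_of_nonneg_left h1 (le_of_lt hδ')
        _ = δ := by rw [hδ'def]; field_simp
    have hEfin := hclose δ hδ
    set Bad : Set ℕ := {m | ¬ ∃! j : ℕ, F j = m} ∪ (F '' {j | δ ≤ |A (F j) - S j|}) with hBaddef
    have hBadfin : Bad.Finite := hab.union (hEfin.image F)
    obtain ⟨V, hV⟩ := hbdd A _ hBadfin
    rw [frequently_atTop]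
    intro N
    set C := max V (A (N + 1)) with hCdef
    have hC0 : 0 ≤ C := le_trans (hA0 (N + 1)) (le_max_right _ _)
    obtain ⟨n, hnN, hn1, hnd⟩ := dirichlet_aux (fun i => L / α i) hδ' (⌊C / L⌋.toNat + 1)
    have hn1' : (1 : ℝ) ≤ (n : ℝ) := by exact_mod_cast hn1
    set c := (n : ℝ) * L with hcdef
    have hnC : C < c := by
      have hcast : ((⌊C / L⌋.toNat : ℕ) : ℝ) = ((⌊C / L⌋ : ℤ) : ℝ) := by
        exact_mod_cast Int.toNat_of_nonneg (Int.floor_nonneg.2 (div_nonneg hC0 (le_of_lt hL)))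
      have h1 : C / L < ((⌊C / L⌋.toNat + 1 : ℕ) : ℝ) := by
        push_cast; rw [hcast]; linarith [Int.lt_floor_add_one (C / L)]
      have h2 : C / L < (n : ℝ) := lt_of_lt_of_le h1 (by exact_mod_cast hnN)
      exact (div_lt_iff₀ hL).1 h2
    -- S avoids the middle of the interval (c, c + L)
    have hSavoid : ∀ j, S j ∉ Set.Ioo (c + δ) (c + L - δ) := by
      intro j hmem
      rw [hSe j] at hmem
      rcases he : e j with x | ⟨i, p, t⟩
      · rw [he] at hmem
        simp only [sval, Set.mem_Ioo] at hmem
        nlinarith [hmem.1]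
      · rw [he] at hmem
        simp only [sval, Set.mem_Ioo] at hmem
        obtain ⟨h1, h2⟩ := hmem
        obtain ⟨m, hm⟩ := hnd i
        have hαi := hα0 i
        have hαiL := hmin i
        have hmm : |c - (m : ℝ) * α i| ≤ δ' * α i := by
          have e1 : c - (m : ℝ) * α i = ((n : ℝ) * (L / α i) - m) * α i := by
            rw [hcdef]; field_simp
          rw [e1, abs_mul, abs_of_pos hαi]
          exact mul_le_mul_of_nonneg_right hm (le_of_lt hαi)
        have hmδ := abs_le.1 (le_trans hmm (hδ'α i))
        have hp1 : (1 : ℝ) ≤ ((p : ℕ) : ℝ) := by exact_mod_cast p.one_le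
        have key1 : (m : ℝ) * α i < ((p : ℕ) : ℝ) * α i := by linarith [hmδ.2]
        have key2 : ((p : ℕ) : ℝ) * α i < ((m : ℝ) + 1) * α i := by nlinarith [hmδ.1]
        have k1 : (m : ℝ) < ((p : ℕ) : ℝ) := lt_of_mul_lt_mul_right key1 hαi.le
        have k2 : ((p : ℕ) : ℝ) < (m : ℝ) + 1 := lt_of_mul_lt_mul_right key2 hαi.le
        have k1' : m < ((p : ℕ) : ℤ) := by exact_mod_cast k1
        have k2' : ((p : ℕ) : ℤ) < m + 1 := by exact_mod_cast k2
        omega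
    -- A avoids a slightly smaller interval
    have hAavoid : ∀ m : ℕ, A m ∉ Set.Ioo (c + 2 * δ) (c + L - 2 * δ) := by
      intro m hmem
      obtain ⟨h1, h2⟩ := hmem
      have hmbad : m ∉ Bad := by
        intro hm
        have hAm := hV m hm
        have := le_max_left V (A (N + 1))
        linarith
      rw [hBaddef] at hmbad
      have hmB : ∃! j : ℕ, F j = m := by
        by_contra h
        exact hmbad (Or.inl h)
      obtain ⟨j, hFj, -⟩ := hmB
      have hjE : ¬ (δ ≤ |A (F j) - S j|) := by
        intro hj
        exact hmbad (Or.inr ⟨j, hj, hFj⟩)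
      have habs := abs_lt.1 (not_le.1 hjE)
      rw [hFj] at habs
      exact hSavoid j ⟨by linarith [habs.2], by linarith [habs.1]⟩
    -- extract the gap
    obtain ⟨m₁, hm₁⟩ := hAub (c + 2 * δ)
    set T : Set ℕ := {m | A m ≤ c + 2 * δ} with hTdef
    have h0T : (0 : ℕ) ∈ T := by
      have h1 : A 0 ≤ A (N + 1) := hA (Nat.zero_le _)
      have h2 : A (N + 1) ≤ C := le_max_right _ _
      simp only [hTdef, Set.mem_setOf_eq]
      linarith
    have hTbdd : BddAbove T := by
      refine ⟨m₁, fun m hm => ?_⟩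
      by_contra h
      push_neg at h
      have : A m₁ ≤ A m := hA (le_of_lt h)
      simp only [hTdef, Set.mem_setOf_eq] at hm
      linarith
    have hm₀mem := Nat.sSup_mem ⟨0, h0T⟩ hTbdd
    set m₀ := sSup T with hm₀def
    have hm₀T : A m₀ ≤ c + 2 * δ := hm₀mem
    have hm₀1 : m₀ + 1 ∉ T := fun h => (Nat.lt_succ_self m₀).not_ge (le_csSup hTbdd h)
    have hA1 : c + 2 * δ < A (m₀ + 1) := by
      by_contra h
      push_neg at h
      exact hm₀1 h
    have hA2 : c + L - 2 * δ ≤ A (m₀ + 1) := by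
      rcases lt_or_ge (A (m₀ + 1)) (c + L - 2 * δ) with h | h
      · exact absurd ⟨hA1, h⟩ (hAavoid (m₀ + 1))
      · exact h
    refine ⟨m₀, ?_, ?_⟩
    · by_contra h
      push_neg at h
      have h1 : A (m₀ + 1) ≤ A (N + 1) := hA (by omega)
      have h2 : A (N + 1) ≤ C := le_max_right _ _
      linarith
    · linarith
  -- conclude
  have hbddU : IsBoundedUnder (· ≤ ·) atTop (fun j => A (j + 1) - A j) :=
    ⟨L + 1, eventually_map.2 (hub 1 one_pos)⟩
  have hcob : IsCoboundedUnder (· ≤ ·) atTop (fun j => A (j + 1) - A j) :=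
    isCoboundedUnder_le_of_le atTop (x := 0)
      (fun j => by have := hA (Nat.le_succ j); linarith)
  refine le_antisymm ?_ ?_
  · refine le_of_forall_pos_le_add fun ε hε => ?_
    exact limsup_le_of_le hcob (hub ε hε)
  · by_contra h
    push_neg at h
    have hε : 0 < (L - limsup (fun j => A (j + 1) - A j) atTop) / 2 := by linarith
    have := le_limsup_of_frequently_le (hlb _ hε) hbddU
    linarith
end
end

section
/- Let R = {α₁,…,α_k} with α₁ = 1 ≤ α₂ ≤ … ≤ α_k. For every ε > 0 there exist infinitely many positive reals t such that the open interval (t, t + 1 − ε) contains no element of S(R), i.e. contains no multiple of any αᵢ. -/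
/-!
The torus `∏ i, ℝ ⧸ α i ℤ` is a compact group, so the orbit of `(1, …, 1)` returns arbitrarily
close to `0`: there are arbitrarily large integers `M` lying within `ε / 2` of a multiple `c i * α i`
of every generator. Since consecutive multiples of `α i ≥ 1` are at least `1` apart, the interval
`(M + ε / 2, M + 1 - ε / 2)` lies strictly between `c i * α i` and `(c i + 1) * α i` for every `i`.
-/

open Filter Topology

noncomputable section

theorem exists_lt_nsmul_norm_lt {G : Type*} [SeminormedAddCommGroup G] [CompactSpace G]
    (g : G) {δ : ℝ} (hδ : 0 < δ) (N : ℕ) : ∃ M : ℕ, N < M ∧ ‖M • g‖ < δ := by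
  obtain ⟨_, φ, hφ, hlim⟩ := CompactSpace.tendsto_subseq fun n : ℕ => n • g
  obtain ⟨K, hK⟩ := Metric.cauchySeq_iff'.mp hlim.cauchySeq δ hδ
  have hKn : K ≤ φ K + N + 1 := by have : K ≤ φ K := hφ.le_apply; omega
  have hgap : φ K + N < φ (φ K + N + 1) := by
    have : φ K + N + 1 ≤ φ (φ K + N + 1) := hφ.le_apply; omega
  refine ⟨φ (φ K + N + 1) - φ K, by omega, ?_⟩
  rw [sub_nsmul g (by omega), ← sub_eq_add_neg, ← dist_eq_norm]
  exact hK _ hKn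

theorem AddCircle.exists_abs_sub_int_mul_lt {p x δ : ℝ} (h : ‖(x : AddCircle p)‖ < δ) :
    ∃ c : ℤ, |x - c * p| < δ :=
  ⟨_, AddCircle.norm_eq (p := p) ▸ h⟩

theorem intCast_mul_notMem_Ioo {a : ℝ} (ha : 0 ≤ a) (c m : ℤ) :
    (m : ℝ) * a ∉ Set.Ioo (c * a) ((c + 1) * a) := by
  rintro ⟨hlo, hhi⟩
  have hcm : c < m := by exact_mod_cast lt_of_mul_lt_mul_right hlo ha
  have : ((c : ℝ) + 1) ≤ m := by exact_mod_cast hcm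
  linarith [mul_le_mul_of_nonneg_right this ha]

theorem stmt5_general {k : ℕ} (α : Fin k → ℝ) (hle : ∀ i, 1 ≤ α i) :
    ∀ ε > 0, ∀ T : ℝ, ∃ t : ℝ, T < t ∧
      ∀ i (n : ℕ+), ((n : ℝ) * α i) ∉ Set.Ioo t (t + 1 - ε) := by
  intro ε hε T
  have hα : ∀ i, 0 < α i := fun i => one_pos.trans_le (hle i)
  have : ∀ i, Fact (0 < α i) := fun i => ⟨hα i⟩
  obtain ⟨M, hTM, hM⟩ := exists_lt_nsmul_norm_lt (fun i => ((1 : ℝ) : AddCircle (α i)))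
    (half_pos hε) ⌈T⌉₊
  refine ⟨M + ε / 2, by linarith [Nat.le_ceil T, (Nat.cast_lt (α := ℝ)).2 hTM], fun i n => ?_⟩
  have hMi : ‖((M : ℝ) : AddCircle (α i))‖ < ε / 2 := by
    simpa [← AddCircle.coe_nsmul] using (norm_le_pi_norm _ i).trans_lt hM
  obtain ⟨c, hc⟩ := AddCircle.exists_abs_sub_int_mul_lt hMi
  rw [abs_lt] at hc
  have hIoo : Set.Ioo (M + ε / 2) (M + ε / 2 + 1 - ε) ⊆ Set.Ioo (c * α i) ((c + 1) * α i) :=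
    Set.Ioo_subset_Ioo (by linarith) (by linarith [hle i])
  exact fun hn => intCast_mul_notMem_Ioo (hα i).le c n (by exact_mod_cast hIoo hn)

theorem stmt5 {k : ℕ} (α : Fin k → ℝ) (hle : ∀ i, 1 ≤ α i) (h1 : ∃ i, α i = 1) :
    ∀ ε > 0, ∀ T : ℝ, ∃ t : ℝ, T < t ∧
      ∀ i (n : ℕ+), ((n : ℝ) * α i) ∉ Set.Ioo t (t + 1 - ε) :=
  stmt5_general α hle
end
end

section
/- Let A be a monotone increasing sequence of nonnegative reals and R a finite multiset of positive reals with smallest element 1, such that A_j − S(R)_j → 0 as j → ∞. Let N₀ be such that for every integer j > N₀ there are at least two elements of A within distance 1/10 of j, and let G₁(j), G₂(j) be the two elements of A closest to j. Then |G_i(j) − j| → 0 as j → ∞, for i = 1, 2. -/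
/-! Since `1 ∈ R`, every positive integer `n` occupies two positions of `S(R)`, and these positions
tend to infinity with `n`; hence two distinct elements of `A` converge to `n`. The two elements of
`A` closest to `n` are then no farther from `n` than the worse of these two. -/

open Filter Topology

noncomputable section

lemma abs_sub_le_max_of_two_closest {ι : Type*} {A : ι → ℝ} {x : ℝ} {g : Fin 2 → ι}
    (hmin : ∀ m, m ≠ g 0 → m ≠ g 1 → ∀ i, |A (g i) - x| ≤ |A m - x|)
    {m₀ m₁ : ι} (hm : m₀ ≠ m₁) (i : Fin 2) :
    |A (g i) - x| ≤ max |A m₀ - x| |A m₁ - x| := by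
  by_cases h₀ : m₀ ≠ g 0 ∧ m₀ ≠ g 1
  · exact (hmin m₀ h₀.1 h₀.2 i).trans (le_max_left _ _)
  by_cases h₁ : m₁ ≠ g 0 ∧ m₁ ≠ g 1
  · exact (hmin m₁ h₁.1 h₁.2 i).trans (le_max_right _ _)
  -- otherwise `{m₀, m₁} = {g 0, g 1}`
  have hg : g i = m₀ ∨ g i = m₁ := by fin_cases i <;> grind
  rcases hg with hg | hg <;> rw [hg]
  exacts [le_max_left _ _, le_max_right _ _]

lemma IsSEnum.exists_strictMono_indices {k : ℕ} {α : Fin k → ℝ} {S : ℕ → ℝ} (hS : IsSEnum α S)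
    {i₀ : Fin k} (hα : 0 < α i₀) :
    ∃ p : Fin 2 → ℕ → ℕ, (∀ n, p 0 n ≠ p 1 n) ∧ (∀ b (n : ℕ), S (p b n) = (n + 1) * α i₀) ∧
      ∀ b, StrictMono (p b) := by
  obtain ⟨hmono, e, he⟩ := hS
  have hSp : ∀ b (n : ℕ), S (e.symm (.inr (i₀, n.succPNat, b))) = (n + 1) * α i₀ := by
    intro b n
    simp [he, sval]
  refine ⟨fun b n => e.symm (.inr (i₀, n.succPNat, b)), fun n h => ?_, hSp, fun b n n' hn => ?_⟩
  · simpa using e.symm.injective h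
  · refine hmono.reflect_lt ?_
    rw [hSp, hSp]
    gcongr

theorem stmt8_general {k : ℕ} (α : Fin k → ℝ) (h1 : ∃ i, α i = 1)
    (S A : ℕ → ℝ) (hS : IsSEnum α S)
    (hconv : Tendsto (fun j => A j - S j) atTop (nhds 0))
    (N₀ : ℕ) (G : ℕ → Fin 2 → ℕ)
    (hGmin : ∀ j, N₀ < j → ∀ m : ℕ, m ≠ G j 0 → m ≠ G j 1 →
      ∀ i, |A (G j i) - (j : ℝ)| ≤ |A m - (j : ℝ)|) :
    ∀ i, Tendsto (fun j => |A (G j i) - (j : ℝ)|) atTop (nhds 0) := by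
  obtain ⟨i₀, hi₀⟩ := h1
  obtain ⟨p, hne, hSp, hp⟩ := hS.exists_strictMono_indices (hi₀ ▸ one_pos)
  have hclose : ∀ b, Tendsto (fun n => |A (p b n) - (n + 1 : ℝ)|) atTop (𝓝 0) := fun b => by
    simpa [Function.comp_def, hSp, hi₀] using (hconv.comp (hp b).tendsto_atTop).abs
  intro i
  rw [← tendsto_add_atTop_iff_nat 1]
  refine squeeze_zero' (.of_forall fun _ => abs_nonneg _) ?_
    (by simpa using (hclose 0).max (hclose 1))
  filter_upwards [eventually_ge_atTop N₀] with n hn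
  exact_mod_cast abs_sub_le_max_of_two_closest (hGmin (n + 1) (by omega)) (hne n) i

theorem stmt8 {k : ℕ} (α : Fin k → ℝ) (hle : ∀ i, 1 ≤ α i) (h1 : ∃ i, α i = 1)
    (S A : ℕ → ℝ) (hS : IsSEnum α S) (hA : Monotone A) (hA0 : ∀ j, 0 ≤ A j)
    (hconv : Tendsto (fun j => A j - S j) atTop (nhds 0))
    (N₀ : ℕ) (G : ℕ → Fin 2 → ℕ)
    (hGne : ∀ j, N₀ < j → G j 0 ≠ G j 1)
    (hGclose : ∀ j, N₀ < j → ∀ i, |A (G j i) - (j : ℝ)| < 1 / 10)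
    (hGmin : ∀ j, N₀ < j → ∀ m : ℕ, m ≠ G j 0 → m ≠ G j 1 →
      ∀ i, |A (G j i) - (j : ℝ)| ≤ |A m - (j : ℝ)|) :
    ∀ i, Tendsto (fun j => |A (G j i) - (j : ℝ)|) atTop (nhds 0) :=
  stmt8_general α h1 S A hS hconv N₀ G hGmin
end
end

section
/- Let R be a finite multiset of positive reals containing 1 as its smallest element, let R̂ be R with one copy of 1 removed, and let A be a countable multiset of nonnegative reals admitting a close almost-bijection F : S(R) → A. Define Â = A with the two elements closest to each integer j > N₀ removed (for suitable large N₀). If Â is infinite, then there exists a close almost-bijection F̂ : S(R̂) → Â. -/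
open Filter Topology

noncomputable section

/-!
Split `S(R)` into `S(R̂)`, one extra zero, and the two copies of each `n ∈ ℕ⁺` coming from the
removed `1`. For all but finitely many `n`, the close almost-bijection `F` sends the two copies of
`n` to two distinct points of `A` within some `d n < 1/2` of `n`; the two points `G n` of `A`
nearest to `n` are then also within `d n`, so a permutation of `A` supported on these (at most
four) points moves the images onto `G n` while moving nothing by more than `2 d n`. The supports
are disjoint for distinct `n`, so these permutations glue to one permutation `P` of `A`, which is
close because `d n → 0`. Hence `P ∘ F` is again a close almost-bijection, now mapping the copies
of `n` onto `G n`. It therefore sends `S(R̂)` into `Â` and the rest of `S(R)` outside `Â`, up to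
finitely many exceptions, and so restricts to a close almost-bijection `S(R̂) → Â`.
-/

open Function Set

theorem List.exists_perm_comp_eq_of_perm_ofFn {n : ℕ} {α : Type*} [LinearOrder α]
    {f g : Fin n → α} (h : (List.ofFn f).Perm (List.ofFn g)) :
    ∃ σ : Equiv.Perm (Fin n), f ∘ σ = g := by
  have hsort : f ∘ Tuple.sort f = g ∘ Tuple.sort g :=
    List.ofFn_injective <| List.Perm.eq_of_sortedLE (Tuple.monotone_sort f).sortedLE_ofFn
      (Tuple.monotone_sort g).sortedLE_ofFn <|
      ((Tuple.sort f).ofFn_comp_perm f).trans (h.trans ((Tuple.sort g).ofFn_comp_perm g).symm)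
  refine ⟨(Tuple.sort g).symm.trans (Tuple.sort f), funext fun i => ?_⟩
  simpa using congrFun hsort ((Tuple.sort g).symm i)

namespace Equiv.Perm

variable {α : Type*}

theorem mapsTo_of_forall_notMem {π : Perm α} {V : Set α} (h : ∀ x ∉ V, π x = x) :
    MapsTo π V V := fun x hx => by
  by_contra hπx
  exact hπx (by rwa [π.injective (h _ hπx)])

theorem exists_apply_eq_apply_eq [DecidableEq α] {a b c d : α} (hab : a ≠ b) (hcd : c ≠ d) :
    ∃ π : Perm α, π a = c ∧ π b = d ∧ ∀ x ∉ ({a, b, c, d} : Set α), π x = x := by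
  refine ⟨(swap a c).trans (swap (swap a c b) d), ?_, ?_, ?_⟩
  · simp only [trans_apply, swap_apply_left]
    exact swap_apply_of_ne_of_ne (by rw [swap_apply_def]; grind) hcd
  · simp only [trans_apply, swap_apply_left]
  · intro x hx
    simp only [mem_insert_iff, mem_singleton_iff, not_or] at hx
    simp only [trans_apply, swap_apply_def]
    grind

theorem exists_eqOn_of_pairwiseDisjoint {ι : Type*} {s : Set ι} {V : ι → Set α}
    (hV : s.PairwiseDisjoint V) (π : ι → Perm α) (hπ : ∀ i ∈ s, ∀ x ∉ V i, π i x = x) :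
    ∃ P : Perm α, (∀ i ∈ s, EqOn P (π i) (V i)) ∧ ∀ x, (∀ i ∈ s, x ∉ V i) → P x = x := by
  classical
  let glue (τ : ι → Perm α) (x : α) : α :=
    if h : ∃ i ∈ s, x ∈ V i then τ h.choose x else x
  have glue_eq : ∀ τ : ι → Perm α, ∀ i ∈ s, ∀ x ∈ V i, glue τ x = τ i x := by
    intro τ i hi x hx
    have h : ∃ i ∈ s, x ∈ V i := ⟨i, hi, hx⟩
    obtain ⟨hs, hxV⟩ := h.choose_spec
    simp only [glue, dif_pos h, hV.elim hs hi (Set.not_disjoint_iff.mpr ⟨x, hxV, hx⟩)]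
  have glue_of_forall : ∀ τ : ι → Perm α, ∀ x, (∀ i ∈ s, x ∉ V i) → glue τ x = x :=
    fun τ x hx => dif_neg fun ⟨i, hi, hxi⟩ => hx i hi hxi
  have hπ' : ∀ i ∈ s, ∀ x ∉ V i, (π i).symm x = x := fun i hi x hx =>
    (π i).symm_apply_eq.mpr (hπ i hi x hx).symm
  have inv : ∀ τ τ' : ι → Perm α, (∀ i ∈ s, ∀ x ∉ V i, τ i x = x) →
      (∀ i ∈ s, ∀ x, τ' i (τ i x) = x) → LeftInverse (glue τ') (glue τ) := by
    intro τ τ' hτ hττ' x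
    by_cases h : ∃ i ∈ s, x ∈ V i
    · obtain ⟨i, hi, hx⟩ := h
      rw [glue_eq τ i hi x hx, glue_eq τ' i hi _ (mapsTo_of_forall_notMem (hτ i hi) hx), hττ' i hi]
    · push Not at h
      rw [glue_of_forall τ x h, glue_of_forall τ' x h]
  refine ⟨⟨glue π, glue fun i => (π i).symm, inv _ _ hπ fun i _ => (π i).symm_apply_apply,
    inv _ _ hπ' fun i _ => (π i).apply_symm_apply⟩, fun i hi x hx => glue_eq π i hi x hx,
    glue_of_forall π⟩

end Equiv.Perm

theorem Function.Injective.uncurry_left {α β γ : Type*} {f : α → β → γ}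
    (hf : Injective (uncurry f)) (b : β) : Injective (f · b) :=
  fun a₁ a₂ h => (Prod.mk.inj (hf (a₁ := (a₁, b)) (a₂ := (a₂, b)) h)).1

theorem le_max_of_forall_le_of_ne {α β : Type*} [LinearOrder β] {f : α → β}
    {a b g g₀ g₁ : α} (hab : a ≠ b) (hg : g = g₀ ∨ g = g₁)
    (hmin : ∀ m, m ≠ g₀ → m ≠ g₁ → f g ≤ f m) : f g ≤ max (f a) (f b) := by
  by_cases ha : a ≠ g₀ ∧ a ≠ g₁
  · exact (hmin a ha.1 ha.2).trans (le_max_left _ _)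
  by_cases hb : b ≠ g₀ ∧ b ≠ g₁
  · exact (hmin b hb.1 hb.2).trans (le_max_right _ _)
  obtain rfl | rfl : g = a ∨ g = b := by grind
  exacts [le_max_left _ _, le_max_right _ _]

theorem PNat.pairwiseDisjoint_of_abs_sub_lt_half {β : Type*} {A : β → ℝ} {s : Set ℕ+}
    {V : ℕ+ → Set β} (h : ∀ n ∈ s, ∀ m ∈ V n, |A m - n| < 1 / 2) : s.PairwiseDisjoint V := by
  intro n hn n' hn' hne
  refine Set.disjoint_left.mpr fun m hm hm' => hne (PNat.coe_injective ?_)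
  have h₁ := abs_lt.mp (h n hn m hm)
  have h₂ := abs_lt.mp (h n' hn' m hm')
  have hlt : (n : ℝ) < n' + 1 ∧ (n' : ℝ) < n + 1 := ⟨by linarith, by linarith⟩
  have hlt' : (n : ℕ) < n' + 1 ∧ (n' : ℕ) < n + 1 := by exact_mod_cast hlt
  omega

theorem not_existsUnique_apply_eq_of_ne {α β : Type*} {F : α → β} {p q : α} (hpq : p ≠ q)
    (h : F p = F q) : ¬ ∃! j, F j = F q :=
  fun ⟨_, _, huniq⟩ => hpq ((huniq p h).trans (huniq q rfl).symm)

section CloseSeq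

variable {S A : ℕ → ℝ} {F : ℕ → ℕ}

theorem CloseSeq.finite_preimage (hF : CloseSeq S A F) (hS : Tendsto S atTop atTop)
    {t : Set ℕ} (ht : t.Finite) : (F ⁻¹' t).Finite := by
  refine ht.preimage' fun m _ => ?_
  have hlarge : {j | ¬ A m + 1 < S j}.Finite :=
    eventually_cofinite.mp (Nat.cofinite_eq_atTop ▸ hS.eventually_gt_atTop (A m + 1))
  refine ((hF 1 one_pos).union hlarge).subset fun j (hj : F j = m) => ?_
  by_contra! h
  simp only [mem_union, mem_ofPred_eq, not_or, not_le, hj] at h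
  linarith [(abs_lt.mp h.1).1]

theorem CloseSeq.comp {B : ℕ → ℝ} {P : ℕ → ℕ} (hF : CloseSeq S A F)
    (hS : Tendsto S atTop atTop) (hP : CloseSeq A B P) : CloseSeq S B (P ∘ F) := by
  intro ε hε
  refine ((hF (ε / 2) (by positivity)).union
    (hF.finite_preimage hS (hP (ε / 2) (by positivity)))).subset fun j hj => ?_
  by_contra! h
  simp only [mem_union, mem_ofPred_eq, mem_preimage, not_or, not_le, comp_apply] at h hj
  linarith [abs_sub_le (B (P (F j))) (A (F j)) (S j)]

theorem AlmostBij.perm_comp (hF : AlmostBij F) (P : Equiv.Perm ℕ) : AlmostBij (P ∘ F) := by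
  refine (hF.preimage P.symm.injective.injOn).subset fun n hn => ?_
  simpa only [mem_preimage, mem_ofPred_eq, comp_apply, ← P.eq_symm_apply] using hn

theorem CloseSeq.exists_restrict (hF : CloseSeq S A F) (hFab : AlmostBij F) {u e : ℕ → ℕ}
    (hu : Injective u) (he : Injective e) (hout : {j | F (u j) ∉ range e}.Finite)
    (hin : {p | p ∉ range u ∧ F p ∈ range e}.Finite) :
    ∃ Fhat, CloseSeq (S ∘ u) (A ∘ e) Fhat ∧ AlmostBij Fhat := by
  classical
  set Fhat : ℕ → ℕ := fun j => invFun e (F (u j))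
  have hFhat : ∀ j, F (u j) ∈ range e → e (Fhat j) = F (u j) := fun j => invFun_eq
  refine ⟨Fhat, fun ε hε => ?_, ?_⟩
  · refine (hout.union ((hF ε hε).preimage hu.injOn)).subset fun j hj => ?_
    by_cases hj' : F (u j) ∈ range e
    · right
      simpa only [mem_preimage, mem_ofPred_eq, comp_apply, hFhat j hj'] using hj
    · exact Or.inl hj'
  · refine ((hFab.preimage he.injOn).union ((hout.image Fhat).union
      ((hin.image F).preimage he.injOn))).subset fun m hm => ?_
    by_contra! h
    simp only [mem_union, mem_preimage, mem_image, mem_ofPred_eq, not_or, not_not,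
      not_exists, not_and] at h
    obtain ⟨⟨p, hp, hpuniq⟩, hmout, hmin⟩ := h
    obtain ⟨j₀, rfl⟩ : p ∈ range u := by
      by_contra hpu
      exact hmin p ⟨hpu, m, hp.symm⟩ hp
    refine hm ⟨j₀, by simp only [Fhat, hp, leftInverse_invFun he m], fun j hj => hu ?_⟩
    by_cases hj' : F (u j) ∈ range e
    · exact hpuniq _ ((hFhat j hj').symm.trans (congrArg e hj))
    · exact absurd hj (hmout j hj')

end CloseSeq

theorem closeSeq_self_of_mapsTo {ι : Type*} {A : ℕ → ℝ} {P : ℕ → ℕ} {s : Set ι}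
    {V : ι → Set ℕ} {c d : ι → ℝ} (hV : ∀ i ∈ s, (V i).Finite)
    (hd : ∀ ε > 0, {i | ε ≤ d i}.Finite) (hVd : ∀ i ∈ s, ∀ m ∈ V i, |A m - c i| ≤ d i)
    (hPV : ∀ i ∈ s, MapsTo P (V i) (V i)) (hPfix : ∀ m, (∀ i ∈ s, m ∉ V i) → P m = m) :
    CloseSeq A A P := by
  intro ε hε
  refine ((hd (ε / 2) (half_pos hε)).inter_of_left s |>.biUnion fun i hi => hV i hi.2).subset
    fun m (hm : ε ≤ |A (P m) - A m|) => ?_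
  simp only [mem_iUnion]
  by_cases h : ∃ i ∈ s, m ∈ V i
  · obtain ⟨i, hi, hmV⟩ := h
    refine ⟨i, ⟨?_, hi⟩, hmV⟩
    change ε / 2 ≤ d i
    linarith [abs_sub_le (A (P m)) (c i) (A m), abs_sub_comm (A m) (c i), hVd i hi _ (hPV i hi hmV),
      hVd i hi m hmV]
  · push Not at h
    rw [hPfix m h, sub_self, abs_zero] at hm
    linarith

section Reroute

variable {S A : ℕ → ℝ} {F : ℕ → ℕ} {r : ℕ+ → Fin 2 → ℕ}

theorem CloseSeq.finite_setOf_le_max_dev (hF : CloseSeq S A F) (hr : Injective (uncurry r))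
    (hSr : ∀ n t, S (r n t) = n) {ε : ℝ} (hε : 0 < ε) :
    {n : ℕ+ | ε ≤ max |A (F (r n 0)) - n| |A (F (r n 1)) - n|}.Finite := by
  have h : ∀ t, {n : ℕ+ | ε ≤ |A (F (r n t)) - n|}.Finite := fun t =>
    ((hF ε hε).preimage (hr.uncurry_left t).injOn).subset fun n hn => by
      simpa only [mem_preimage, mem_ofPred_eq, hSr] using hn
  exact ((h 0).union (h 1)).subset fun n (hn : ε ≤ max _ _) => le_max_iff.mp hn

theorem CloseSeq.finite_setOf_not_distinct_near (hS : Tendsto S atTop atTop) (hF : CloseSeq S A F)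
    (hFab : AlmostBij F) (hr : Injective (uncurry r)) (hSr : ∀ n t, S (r n t) = n) (N₀ : ℕ) :
    {n : ℕ+ | ¬ (N₀ < (n : ℕ) ∧ max |A (F (r n 0)) - n| |A (F (r n 1)) - n| < 1 / 2 ∧
      F (r n 0) ≠ F (r n 1))}.Finite := by
  have hsmall : {n : ℕ+ | ¬ N₀ < (n : ℕ)}.Finite :=
    ((finite_Iic N₀).preimage PNat.coe_injective.injOn).subset fun n hn => not_lt.mp hn
  have hcoll : {n : ℕ+ | F (r n 0) = F (r n 1)}.Finite :=
    ((hF.finite_preimage hS hFab).preimage (hr.uncurry_left 0).injOn).subset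
      fun n (hn : F (r n 0) = F (r n 1)) =>
        not_existsUnique_apply_eq_of_ne (hr.ne (a₁ := (n, 1)) (a₂ := (n, 0)) (by simp)) hn.symm
  refine ((hsmall.union (hF.finite_setOf_le_max_dev hr hSr one_half_pos)).union
    hcoll).subset fun n hn => ?_
  simp only [mem_ofPred_eq, not_and_or, not_lt, not_not] at hn
  simp only [mem_union, mem_ofPred_eq, not_lt]
  tauto

theorem CloseSeq.exists_reroute (hS : Tendsto S atTop atTop) (hF : CloseSeq S A F)
    (hFab : AlmostBij F) (hr : Injective (uncurry r)) (hSr : ∀ n t, S (r n t) = n)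
    {N₀ : ℕ} {G : ℕ → Fin 2 → ℕ} (hGne : ∀ j, N₀ < j → G j 0 ≠ G j 1)
    (hGmin : ∀ j, N₀ < j → ∀ m : ℕ, m ≠ G j 0 → m ≠ G j 1 →
      ∀ i, |A (G j i) - (j : ℝ)| ≤ |A m - (j : ℝ)|) :
    ∃ F', CloseSeq S A F' ∧ AlmostBij F' ∧
      {n : ℕ+ | ¬ (N₀ < (n : ℕ) ∧ ∀ t, F' (r n t) = G n t)}.Finite := by
  classical
  set d : ℕ+ → ℝ := fun n => max |A (F (r n 0)) - n| |A (F (r n 1)) - n|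
  set s : Set ℕ+ := {n | N₀ < (n : ℕ) ∧ d n < 1 / 2 ∧ F (r n 0) ≠ F (r n 1)}
  set V : ℕ+ → Set ℕ := fun n => {F (r n 0), F (r n 1), G n 0, G n 1}
  have hVd : ∀ n ∈ s, ∀ m ∈ V n, |A m - n| ≤ d n := by
    rintro n ⟨hN, -, hne⟩ m hm
    simp only [V, mem_insert_iff, mem_singleton_iff] at hm
    rcases hm with rfl | rfl | rfl | rfl
    · exact le_max_left _ _
    · exact le_max_right _ _
    all_goals
      exact le_max_of_forall_le_of_ne (f := fun m => |A m - n|) hne (by simp)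
        fun m h₀ h₁ => hGmin n hN m h₀ h₁ _
  have hπ : ∀ n ∈ s, ∃ π : Equiv.Perm ℕ, π (F (r n 0)) = G n 0 ∧ π (F (r n 1)) = G n 1 ∧
      ∀ x ∉ V n, π x = x := fun n hn => Equiv.Perm.exists_apply_eq_apply_eq hn.2.2 (hGne n hn.1)
  choose! π hπ0 hπ1 hπV using hπ
  obtain ⟨P, hPπ, hPfix⟩ := Equiv.Perm.exists_eqOn_of_pairwiseDisjoint
    (PNat.pairwiseDisjoint_of_abs_sub_lt_half fun n hn m hm => (hVd n hn m hm).trans_lt hn.2.1)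
    π hπV
  have hP : CloseSeq A A P :=
    closeSeq_self_of_mapsTo (fun n _ => toFinite (V n))
      (fun ε hε => hF.finite_setOf_le_max_dev hr hSr hε) hVd
      (fun n hn m hm => hPπ n hn hm ▸ Equiv.Perm.mapsTo_of_forall_notMem (hπV n hn) hm) hPfix
  refine ⟨P ∘ F, hF.comp hS hP, hFab.perm_comp P,
    (hF.finite_setOf_not_distinct_near hS hFab hr hSr N₀).subset fun n hn hns =>
      hn ⟨hns.1, Fin.forall_fin_two.mpr ⟨?_, ?_⟩⟩⟩
  · simp [hPπ n hns (by simp [V] : F (r n 0) ∈ V n), hπ0 n hns]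
  · simp [hPπ n hns (by simp [V] : F (r n 1) ∈ V n), hπ1 n hns]

theorem CloseSeq.exists_restrict_of_eq_nearest (hS : Tendsto S atTop atTop)
    (hF : CloseSeq S A F) (hFab : AlmostBij F) {u : ℕ → ℕ} {z : ℕ} (hu : Injective u)
    (hur : ∀ j n t, u j ≠ r n t) (hcover : ∀ p ∉ range u, p = z ∨ ∃ n t, p = r n t)
    {N₀ : ℕ} {G : ℕ → Fin 2 → ℕ}
    (hFG : {n : ℕ+ | ¬ (N₀ < (n : ℕ) ∧ ∀ t, F (r n t) = G n t)}.Finite)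
    {e : ℕ → ℕ} (he : Injective e) (hrange : range e = {m | ∀ j, N₀ < j → ∀ i, m ≠ G j i}) :
    ∃ Fhat, CloseSeq (S ∘ u) (A ∘ e) Fhat ∧ AlmostBij Fhat := by
  set B := {n : ℕ+ | ¬ (N₀ < (n : ℕ) ∧ ∀ t, F (r n t) = G n t)}
  have hmem : ∀ m, m ∈ range e ↔ ∀ j, N₀ < j → ∀ i, m ≠ G j i := by simp [hrange]
  refine hF.exists_restrict hFab hu he ?_ ?_
  · have hfin : ({m | ¬ ∃! p, F p = m} ∪ ⋃ n ∈ B, range (G n)).Finite :=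
      hFab.union (hFG.biUnion fun n _ => finite_range _)
    refine ((hF.finite_preimage hS hfin).preimage hu.injOn).subset fun j hj => ?_
    simp only [hmem, not_forall, not_not] at hj
    obtain ⟨n, hn, t, ht⟩ := hj
    set n' : ℕ+ := ⟨n, by omega⟩
    by_cases hB : n' ∈ B
    · exact Or.inr (mem_biUnion hB ⟨t, ht.symm⟩)
    · have hrt : F (r n' t) = G n t := (not_not.mp hB).2 t
      exact Or.inl (not_existsUnique_apply_eq_of_ne (hur j n' t).symm (hrt.trans ht.symm))
  · refine ((finite_singleton z).union ((hFG.prod finite_univ).image (uncurry r))).subset ?_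
    rintro p ⟨hpu, hpe⟩
    obtain rfl | ⟨n, t, rfl⟩ := hcover p hpu
    · exact Or.inl rfl
    refine Or.inr ⟨(n, t), ⟨fun hn => ?_, trivial⟩, rfl⟩
    exact (hmem _).mp hpe n hn.1 t (hn.2 t)

end Reroute

theorem exists_perm_comp_eq_cons_of_coe_eq {k : ℕ} {α : Fin (k + 1) → ℝ} {β : Fin k → ℝ}
    (h : (List.ofFn α : Multiset ℝ) = 1 ::ₘ (List.ofFn β : Multiset ℝ)) :
    ∃ σ : Equiv.Perm (Fin (k + 1)), α ∘ σ = Fin.cons 1 β :=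
  List.exists_perm_comp_eq_of_perm_ofFn <| Multiset.coe_eq_coe.mp <| by
    rw [h, List.ofFn_succ, Fin.cons_zero]
    simp only [Fin.cons_succ, Multiset.cons_coe]

theorem IsSEnum.exists_split {k : ℕ} {α : Fin (k + 1) → ℝ} {β : Fin k → ℝ} {S Shat : ℕ → ℝ}
    {σ : Equiv.Perm (Fin (k + 1))} (hσ : α ∘ σ = Fin.cons 1 β) (hS : IsSEnum α S)
    (hShat : IsSEnum β Shat) :
    ∃ (u : ℕ → ℕ) (r : ℕ+ → Fin 2 → ℕ) (z : ℕ), Injective u ∧ Injective (uncurry r) ∧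
      S ∘ u = Shat ∧ (∀ n t, S (r n t) = n) ∧ (∀ j n t, u j ≠ r n t) ∧
      ∀ p ∉ range u, p = z ∨ ∃ n t, p = r n t := by
  obtain ⟨-, eS, hSe⟩ := hS
  obtain ⟨-, eT, hTe⟩ := hShat
  -- `ι` embeds the indices of `S(R̂)` into those of `S(R)`, missing exactly the extra zero
  -- `Fin.last k` and the multiples of the removed `1 = α (σ 0)`.
  let ι : Fin k ⊕ (Fin k × ℕ+ × Fin 2) → Fin (k + 1) ⊕ (Fin (k + 1) × ℕ+ × Fin 2) :=
    Sum.map Fin.castSucc (Prod.map (σ ∘ Fin.succ) id)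
  have hα0 : α (σ 0) = 1 := by simpa using congrFun hσ 0
  have hαsucc : ∀ i, α (σ i.succ) = β i := fun i => by simpa using congrFun hσ i.succ
  have hι : ∀ x, sval α (ι x) = sval β x := by
    rintro (a | ⟨i, n, t⟩)
    · rfl
    · simp [ι, sval, hαsucc]
  have hιinj : Injective ι :=
    (Fin.castSucc_injective _).sumMap ((σ.injective.comp (Fin.succ_injective _)).prodMap
      injective_id)
  have hιr : ∀ x n t, ι x ≠ .inr (σ 0, n, t) := by
    rintro (a | ⟨i, n', t'⟩) n t h
    · simp [ι] at h
    · simp [ι, Fin.succ_ne_zero] at h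
  have hcover : ∀ y, y = .inl (Fin.last k) ∨ (∃ n t, y = .inr (σ 0, n, t)) ∨ y ∈ range ι := by
    rintro (a | ⟨i, n, t⟩)
    · obtain ⟨a, rfl⟩ | rfl := Fin.eq_castSucc_or_eq_last a
      exacts [Or.inr (Or.inr ⟨.inl a, rfl⟩), Or.inl rfl]
    · obtain hi | ⟨c, hc⟩ := Fin.eq_zero_or_eq_succ (σ.symm i)
      · exact Or.inr (Or.inl ⟨n, t, by rw [← hi, Equiv.apply_symm_apply]⟩)
      · exact Or.inr (Or.inr ⟨.inr (c, n, t), by simp [ι, ← hc]⟩)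
  refine ⟨eS.symm ∘ ι ∘ eT, fun n t => eS.symm (.inr (σ 0, n, t)), eS.symm (.inl (Fin.last k)),
    eS.symm.injective.comp (hιinj.comp eT.injective), ?_, ?_, ?_, ?_, ?_⟩
  · rintro ⟨n, t⟩ ⟨n', t'⟩ h
    simpa using h
  · ext j
    simp [hSe, hTe, hι]
  · intro n t
    simp [hSe, sval, hα0]
  · intro j n t h
    exact hιr _ n t (eS.symm.injective h)
  · intro p hp
    rcases hcover (eS p) with h | ⟨n, t, h⟩ | ⟨x, hx⟩
    · exact Or.inl (eS.symm_apply_eq.mpr h.symm |>.symm)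
    · exact Or.inr ⟨n, t, (eS.symm_apply_eq.mpr h.symm).symm⟩
    · exact absurd ⟨eT.symm x, by simp [hx]⟩ hp

theorem stmt9_general {k : ℕ} (α : Fin (k + 1) → ℝ) (β : Fin k → ℝ)
    (hmult : (List.ofFn α : Multiset ℝ) = 1 ::ₘ (List.ofFn β : Multiset ℝ))
    (S Shat A : ℕ → ℝ) (hS : IsSEnum α S) (hShat : IsSEnum β Shat)
    (F : ℕ → ℕ) (hclose : CloseSeq S A F) (hab : AlmostBij F)
    (N₀ : ℕ)
    (G : ℕ → Fin 2 → ℕ)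
    (hGne : ∀ j, N₀ < j → G j 0 ≠ G j 1)
    (hGmin : ∀ j, N₀ < j → ∀ m : ℕ, m ≠ G j 0 → m ≠ G j 1 →
      ∀ i, |A (G j i) - (j : ℝ)| ≤ |A m - (j : ℝ)|)
    (e : ℕ → ℕ) (he : StrictMono e)
    (hrange : Set.range e = {m : ℕ | ∀ j, N₀ < j → ∀ i, m ≠ G j i}) :
    ∃ Fhat : ℕ → ℕ, CloseSeq Shat (fun j => A (e j)) Fhat ∧ AlmostBij Fhat := by
  obtain ⟨σ, hσ⟩ := exists_perm_comp_eq_cons_of_coe_eq hmult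
  obtain ⟨u, r, z, hu, hr, rfl, hSr, hur, hcover⟩ := hS.exists_split hσ hShat
  have hStop : Tendsto S atTop atTop := hS.1.tendsto_atTop_atTop fun b =>
    ⟨r (Nat.succPNat ⌈b⌉₊) 0, by rw [hSr, Nat.succPNat_coe]; push_cast; linarith [Nat.le_ceil b]⟩
  obtain ⟨F', hF'close, hF'ab, hF'G⟩ := hclose.exists_reroute hStop hab hr hSr hGne hGmin
  exact hF'close.exists_restrict_of_eq_nearest hStop hF'ab hu hur hcover hF'G he.injective hrange

theorem stmt9 {k : ℕ} (α : Fin (k + 1) → ℝ) (β : Fin k → ℝ)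
    (hle : ∀ i, 1 ≤ α i)
    (hmult : (List.ofFn α : Multiset ℝ) = 1 ::ₘ (List.ofFn β : Multiset ℝ))
    (S Shat A : ℕ → ℝ) (hS : IsSEnum α S) (hShat : IsSEnum β Shat)
    (hA : Monotone A) (hA0 : ∀ j, 0 ≤ A j)
    (F : ℕ → ℕ) (hclose : CloseSeq S A F) (hab : AlmostBij F)
    (N₀ : ℕ)
    (hN₀ : ∀ j : ℕ, N₀ < j → ∃ m₁ m₂ : ℕ, m₁ ≠ m₂ ∧
      |A m₁ - (j : ℝ)| < 1 / 10 ∧ |A m₂ - (j : ℝ)| < 1 / 10)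
    (G : ℕ → Fin 2 → ℕ)
    (hGne : ∀ j, N₀ < j → G j 0 ≠ G j 1)
    (hGclose : ∀ j, N₀ < j → ∀ i, |A (G j i) - (j : ℝ)| < 1 / 10)
    (hGmin : ∀ j, N₀ < j → ∀ m : ℕ, m ≠ G j 0 → m ≠ G j 1 →
      ∀ i, |A (G j i) - (j : ℝ)| ≤ |A m - (j : ℝ)|)
    (e : ℕ → ℕ) (he : StrictMono e)
    (hrange : Set.range e = {m : ℕ | ∀ j, N₀ < j → ∀ i, m ≠ G j i}) :
    ∃ Fhat : ℕ → ℕ, CloseSeq Shat (fun j => A (e j)) Fhat ∧ AlmostBij Fhat :=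
  stmt9_general α β hmult S Shat A hS hShat F hclose hab N₀ G hGne hGmin e he hrange
end
end

section
/- Let P be a positive self-adjoint operator on a separable Hilbert space with orthonormal eigenbasis {φ_j} and eigenvalues λ_j ≥ λ_k > 0 for j > k, and let S be a bounded operator such that S P^q is bounded for every positive integer q, with ‖S P^{p+N} φ_j‖ ≤ K_{p,N} for all j. If Σ_j λ_j^{−2N} < ∞ for some N, then for every unit vector f orthogonal to span{φ₁,…,φ_k} and every positive integer p, ‖Sf‖ ≤ λ_k^{−p} K_{p,N} (Σ_{j=1}^∞ λ_j^{−2N})^{1/2}. -/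
open Filter Topology

noncomputable section

/-! Expand `f = ∑ ⟪φ_j, f⟫ φ_j`. Only `j ≥ k` contribute, and for those the hypothesis gives
`‖S φ_j‖ ≤ λ_k^{-p} K λ_j^{-N}`; Cauchy–Schwarz against Parseval's identity
`∑ |⟪φ_j, f⟫|² = ‖f‖² = 1` bounds the resulting series. -/

theorem Real.summable_and_tsum_mul_le_sqrt_mul_sqrt {ι : Type*} {f g : ι → ℝ}
    (hf : ∀ i, 0 ≤ f i) (hg : ∀ i, 0 ≤ g i)
    (hf2 : Summable fun i => f i ^ 2) (hg2 : Summable fun i => g i ^ 2) :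
    (Summable fun i => f i * g i) ∧ ∑' i, f i * g i ≤ √(∑' i, f i ^ 2) * √(∑' i, g i ^ 2) := by
  simp_rw [← Real.rpow_two] at hf2 hg2 ⊢
  simpa only [Real.sqrt_eq_rpow, one_div] using
    Real.summable_and_inner_le_Lp_mul_Lq_tsum_of_nonneg .two_two hf hg hf2 hg2

theorem HilbertBasis.norm_apply_le_of_norm_apply_basis_le {ι 𝕜 E F : Type*} [RCLike 𝕜]
    [NormedAddCommGroup E] [InnerProductSpace 𝕜 E] [NormedAddCommGroup F] [NormedSpace 𝕜 F]
    (b : HilbertBasis ι 𝕜 E) (S : E →L[𝕜] F) (x : E) {C : ℝ} {w : ι → ℝ} (hC : 0 ≤ C)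
    (hw : ∀ i, 0 ≤ w i) (hw2 : Summable fun i => w i ^ 2)
    (hS : ∀ i, inner 𝕜 (b i) x ≠ 0 → ‖S (b i)‖ ≤ C * w i) :
    ‖S x‖ ≤ C * ‖x‖ * √(∑' i, w i ^ 2) := by
  have parseval : HasSum (fun i => ‖inner 𝕜 (b i) x‖ ^ 2) (‖x‖ ^ 2) := by
    simpa [b.repr_apply_apply, b.repr.norm_map] using lp.hasSum_norm (p := 2) (by norm_num) (b.repr x)
  obtain ⟨hsum, hcs⟩ := Real.summable_and_tsum_mul_le_sqrt_mul_sqrt (fun i => norm_nonneg _) hw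
    parseval.summable hw2
  have hterm : ∀ i, ‖S (inner 𝕜 (b i) x • b i)‖ ≤ C * (‖inner 𝕜 (b i) x‖ * w i) := by
    intro i
    rw [map_smul, norm_smul, mul_left_comm]
    by_cases hi : inner 𝕜 (b i) x = 0
    · simp [hi]
    · exact mul_le_mul_of_nonneg_left (hS i hi) (norm_nonneg _)
  have hexp : HasSum (fun i => S (inner 𝕜 (b i) x • b i)) (S x) := by
    simpa only [b.repr_apply_apply] using (b.hasSum_repr x).mapL S
  calc ‖S x‖ ≤ C * ∑' i, ‖inner 𝕜 (b i) x‖ * w i :=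
        hexp.norm_le_of_bounded (hsum.hasSum.mul_left C) hterm
    _ ≤ C * (‖x‖ * √(∑' i, w i ^ 2)) := by
        rw [parseval.tsum_eq, Real.sqrt_sq (norm_nonneg x)] at hcs
        gcongr
    _ = C * ‖x‖ * √(∑' i, w i ^ 2) := (mul_assoc ..).symm

theorem stmt11_general {H : Type*} [NormedAddCommGroup H] [InnerProductSpace ℝ H] [CompleteSpace H]
    (φ : ℕ → H) (hφ : Orthonormal ℝ φ)
    (hφc : (Submodule.span ℝ (Set.range φ)).topologicalClosure = ⊤)
    (S : H →L[ℝ] H) (lam : ℕ → ℝ) (k p N : ℕ)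
    (hpos : ∀ j, 0 < lam j) (hmono : ∀ j, k ≤ j → lam k ≤ lam j)
    (K : ℝ) (hK : ∀ j, lam j ^ (p + N) * ‖S (φ j)‖ ≤ K)
    (hsum : Summable fun j => (lam j ^ (2 * N))⁻¹) :
    ∀ f : H, ‖f‖ = 1 → (∀ i < k, (inner ℝ (φ i) f : ℝ) = 0) →
      ‖S f‖ ≤ (lam k ^ p)⁻¹ * (K * Real.sqrt (∑' j, (lam j ^ (2 * N))⁻¹)) := by
  intro f hf horth
  set b := HilbertBasis.mk hφ hφc.ge
  have hb : ⇑b = φ := HilbertBasis.coe_mk _ _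
  have hK0 : 0 ≤ K := (mul_nonneg (pow_nonneg (hpos 0).le _) (norm_nonneg _)).trans (hK 0)
  have hsq : (fun j => (lam j ^ N)⁻¹ ^ 2) = fun j => (lam j ^ (2 * N))⁻¹ := by
    funext j; rw [inv_pow, ← pow_mul, mul_comm]
  have hdecay : ∀ j, k ≤ j → ‖S (φ j)‖ ≤ (lam k ^ p)⁻¹ * K * (lam j ^ N)⁻¹ := by
    intro j hj
    have hlam := hpos j
    have hlamk := hpos k
    calc ‖S (φ j)‖ ≤ K / lam j ^ (p + N) :=
          (le_div_iff₀ (by positivity)).2 (by rw [mul_comm]; exact hK j)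
      _ = K * (lam j ^ p)⁻¹ * (lam j ^ N)⁻¹ := by rw [pow_add, div_eq_mul_inv, mul_inv, mul_assoc]
      _ ≤ K * (lam k ^ p)⁻¹ * (lam j ^ N)⁻¹ := by gcongr; exact hmono j hj
      _ = (lam k ^ p)⁻¹ * K * (lam j ^ N)⁻¹ := by ring
  have key := b.norm_apply_le_of_norm_apply_basis_le S f (w := fun j => (lam j ^ N)⁻¹)
    (by have := hpos k; positivity) (fun j => by have := hpos j; positivity) (hsq ▸ hsum)
    fun j hj => hb ▸ hdecay j (not_lt.1 fun hjk => hj (hb ▸ horth j hjk))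
  rwa [hsq, hf, mul_one, mul_assoc] at key

theorem stmt11 {H : Type*} [NormedAddCommGroup H] [InnerProductSpace ℝ H] [CompleteSpace H]
    (φ : ℕ → H) (hφ : Orthonormal ℝ φ)
    (hφc : (Submodule.span ℝ (Set.range φ)).topologicalClosure = ⊤)
    (S : H →L[ℝ] H) (lam : ℕ → ℝ) (k p N : ℕ) (hp : 0 < p)
    (hpos : ∀ j, 0 < lam j) (hmono : ∀ j, k ≤ j → lam k ≤ lam j)
    (K : ℝ) (hK : ∀ j, lam j ^ (p + N) * ‖S (φ j)‖ ≤ K)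
    (hsum : Summable fun j => (lam j ^ (2 * N))⁻¹) :
    ∀ f : H, ‖f‖ = 1 → (∀ i < k, (inner ℝ (φ i) f : ℝ) = 0) →
      ‖S f‖ ≤ (lam k ^ p)⁻¹ * (K * Real.sqrt (∑' j, (lam j ^ (2 * N))⁻¹)) :=
  stmt11_general φ hφ hφc S lam k p N hpos hmono K hK hsum
end
end

section
/- Let A = {A_j} be the increasing enumeration of a countable multiset of nonnegative reals and suppose there is a close almost-bijection F : S(R) → A for a finite multiset R of positive reals with k elements. Then the counting function of A satisfies #{j : A_j ≤ t} = (2 Σ_{α∈R} 1/α) t + O(1) as t → ∞. -/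
open Filter Topology

noncomputable section

/-
Up to `t`, the sequence `S` has `k + 2 ∑ ⌊t / α i⌋` entries, which is `(2 ∑ 1 / α i) t + O(1)`.
Off finitely many exceptions, `F` is injective and moves entries by less than `1`, so the counting
functions of `S` and `A` bound each other after a unit shift in `t`, up to bounded errors:
`N_A(t) ≤ N_S(t + 1) + D₁` and `N_S(t) ≤ N_A(t + 1) + D₂`. The linear asymptotics of `N_S`
therefore transfer to `N_A`.
-/

theorem Nat.cast_mul_le_iff_le_floor {a t : ℝ} (ha : 0 < a) (ht : 0 ≤ t) (n : ℕ) :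
    (n : ℝ) * a ≤ t ↔ n ≤ ⌊t / a⌋₊ := by
  rw [Nat.le_floor_iff (div_nonneg ht ha.le), le_div_iff₀ ha]

def pnatMulLeEquiv {a t : ℝ} (ha : 0 < a) (ht : 0 ≤ t) :
    {n : ℕ+ // (n : ℝ) * a ≤ t} ≃ Set.Icc 1 ⌊t / a⌋₊ where
  toFun n := ⟨n.1, n.1.pos, (Nat.cast_mul_le_iff_le_floor ha ht _).mp n.2⟩
  invFun m := ⟨⟨m.1, m.2.1⟩, (Nat.cast_mul_le_iff_le_floor ha ht _).mpr m.2.2⟩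
  left_inv _ := rfl
  right_inv _ := rfl

def svalLeEquiv {k : ℕ} {α : Fin k → ℝ} (hα : ∀ i, 0 < α i) {t : ℝ} (ht : 0 ≤ t) :
    {x // sval α x ≤ t} ≃ Fin k ⊕ Σ i, Set.Icc 1 ⌊t / α i⌋₊ × Fin 2 :=
  Equiv.subtypeSum.trans <| Equiv.sumCongr
    (Equiv.subtypeUnivEquiv fun _ => ht)
    ((Equiv.subtypeProdEquivSigmaSubtype fun i (c : ℕ+ × Fin 2) => (c.1 : ℝ) * α i ≤ t).trans
      (Equiv.sigmaCongrRight fun i =>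
        Equiv.prodSubtypeFstEquivSubtypeProd.trans
          (Equiv.prodCongr (pnatMulLeEquiv (hα i) ht) (Equiv.refl _))))

theorem natCard_sval_le {k : ℕ} {α : Fin k → ℝ} (hα : ∀ i, 0 < α i) {t : ℝ} (ht : 0 ≤ t) :
    Nat.card {x // sval α x ≤ t} = k + 2 * ∑ i, ⌊t / α i⌋₊ := by
  rw [Nat.card_congr (svalLeEquiv hα ht)]
  simp [Finset.mul_sum, mul_comm]

theorem Set.ncard_le_ncard_add_ncard_of_injOn_diff {α β : Type*} {s X : Set α} {t : Set β}
    (f : α → β) (hf : Set.MapsTo f (s \ X) t) (f_inj : Set.InjOn f (s \ X))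
    (hX : X.Finite) (ht : t.Finite) : s.ncard ≤ t.ncard + X.ncard :=
  (Set.ncard_le_ncard_sdiff_add_ncard s X hX).trans <|
    Nat.add_le_add_right (Set.ncard_le_ncard_of_injOn f hf f_inj ht) _

namespace CloseSeq

variable {S A : ℕ → ℝ} {F : ℕ → ℕ}

theorem finite_preimage_s16 (hclose : CloseSeq S A F) (hS : ∀ t, {j | S j ≤ t}.Finite)
    {T : Set ℕ} (hT : T.Finite) : (F ⁻¹' T).Finite := by
  refine ((hclose 1 one_pos).union (hT.biUnion fun n _ => hS (A n + 1))).subset ?_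
  intro j hj
  by_cases hjB : 1 ≤ |A (F j) - S j|
  · exact Or.inl hjB
  · refine Or.inr (Set.mem_biUnion hj ?_)
    have := (abs_lt.mp (not_le.mp hjB)).1
    show S j ≤ A (F j) + 1
    linarith

theorem setOf_target_le_subset (t : ℝ) :
    {n | A n ≤ t} ⊆
      {n | ¬∃! j, F j = n} ∪ F '' {j | 1 ≤ |A (F j) - S j|} ∪ F '' {j | S j ≤ t + 1} := by
  intro n hn
  by_cases hn' : ∃! j, F j = n
  · obtain ⟨j, rfl, -⟩ := hn'
    by_cases hj : 1 ≤ |A (F j) - S j|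
    · exact Or.inl (Or.inr ⟨j, hj, rfl⟩)
    · refine Or.inr ⟨j, ?_, rfl⟩
      have := (abs_lt.mp (not_le.mp hj)).1
      change A (F j) ≤ t at hn
      show S j ≤ t + 1
      linarith
  · exact Or.inl (Or.inl hn')

theorem finite_setOf_target_le (hclose : CloseSeq S A F) (hab : AlmostBij F)
    (hS : ∀ t, {j | S j ≤ t}.Finite) (t : ℝ) : {n | A n ≤ t}.Finite :=
  (((hab.union ((hclose 1 one_pos).image F)).union ((hS (t + 1)).image F))).subset
    (setOf_target_le_subset t)

theorem exists_ncard_target_le (hclose : CloseSeq S A F) (hab : AlmostBij F)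
    (hS : ∀ t, {j | S j ≤ t}.Finite) :
    ∃ D : ℕ, ∀ t, {n | A n ≤ t}.ncard ≤ {j | S j ≤ t + 1}.ncard + D := by
  set X := {n | ¬∃! j, F j = n} ∪ F '' {j | 1 ≤ |A (F j) - S j|}
  have hX : X.Finite := hab.union ((hclose 1 one_pos).image F)
  refine ⟨X.ncard, fun t => ?_⟩
  calc {n | A n ≤ t}.ncard ≤ (X ∪ F '' {j | S j ≤ t + 1}).ncard :=
        Set.ncard_le_ncard (setOf_target_le_subset t) (hX.union ((hS (t + 1)).image F))
    _ ≤ X.ncard + {j | S j ≤ t + 1}.ncard :=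
        (Set.ncard_union_le _ _).trans (Nat.add_le_add_left (Set.ncard_image_le (hS _)) _)
    _ = _ := add_comm _ _

theorem exists_ncard_source_le (hclose : CloseSeq S A F) (hab : AlmostBij F)
    (hS : ∀ t, {j | S j ≤ t}.Finite) :
    ∃ D : ℕ, ∀ t, {j | S j ≤ t}.ncard ≤ {n | A n ≤ t + 1}.ncard + D := by
  refine ⟨({j | 1 ≤ |A (F j) - S j|} ∪ F ⁻¹' {n | ¬∃! j, F j = n}).ncard, fun t => ?_⟩
  refine Set.ncard_le_ncard_add_ncard_of_injOn_diff F ?_ ?_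
    ((hclose 1 one_pos).union (hclose.finite_preimage_s16 hS hab))
    (hclose.finite_setOf_target_le hab hS _)
  · rintro j ⟨hj, hjX⟩
    have hjB : ¬1 ≤ |A (F j) - S j| := fun h => hjX (Or.inl h)
    have := (abs_lt.mp (not_le.mp hjB)).2
    change S j ≤ t at hj
    show A (F j) ≤ t + 1
    linarith
  · intro j hj j' _ h
    have hunique : ∃! i, F i = F j := not_not.mp fun h' => hj.2 (Or.inr h')
    exact hunique.unique rfl h.symm

end CloseSeq

namespace IsSEnum

variable {k : ℕ} {α : Fin k → ℝ} {S : ℕ → ℝ}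

theorem nonempty_setOf_le_equiv (hS : IsSEnum α S) (t : ℝ) :
    Nonempty ({j | S j ≤ t} ≃ {x // sval α x ≤ t}) := by
  obtain ⟨-, e, he⟩ := hS
  exact ⟨e.subtypeEquiv fun j => by rw [← he]; rfl⟩

theorem ncard_setOf_le (hS : IsSEnum α S) (hα : ∀ i, 0 < α i) {t : ℝ} (ht : 0 ≤ t) :
    {j | S j ≤ t}.ncard = k + 2 * ∑ i, ⌊t / α i⌋₊ := by
  obtain ⟨E⟩ := hS.nonempty_setOf_le_equiv t
  rw [← Nat.card_coe_set_eq, Nat.card_congr E, natCard_sval_le hα ht]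

theorem finite_setOf_le (hS : IsSEnum α S) (hα : ∀ i, 0 < α i) (t : ℝ) :
    {j | S j ≤ t}.Finite := by
  obtain ⟨E⟩ := hS.nonempty_setOf_le_equiv (max t 0)
  have := Finite.of_equiv _ (E.trans (svalLeEquiv hα le_sup_right)).symm
  exact (Set.toFinite {j | S j ≤ max t 0}).subset fun j (hj : S j ≤ t) => le_max_of_le_left hj

theorem abs_ncard_setOf_le_sub_le (hS : IsSEnum α S) (hα : ∀ i, 0 < α i) {t : ℝ} (ht : 0 ≤ t) :
    |({j | S j ≤ t}.ncard : ℝ) - (2 * ∑ i, (α i)⁻¹) * t| ≤ k := by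
  have hsum : (2 * ∑ i, (α i)⁻¹) * t = 2 * ∑ i, t / α i := by
    simp only [mul_assoc, Finset.sum_mul, div_eq_inv_mul]
  have hfloor_le : ∑ i, (⌊t / α i⌋₊ : ℝ) ≤ ∑ i, t / α i :=
    Finset.sum_le_sum fun i _ => Nat.floor_le (div_nonneg ht (hα i).le)
  have hle_floor_add_one : ∑ i, t / α i ≤ ∑ i, ((⌊t / α i⌋₊ : ℝ) + 1) :=
    Finset.sum_le_sum fun i _ => (Nat.lt_floor_add_one _).le
  simp only [Finset.sum_add_distrib, Finset.sum_const, Finset.card_univ, Fintype.card_fin,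
    nsmul_eq_mul, mul_one] at hle_floor_add_one
  rw [hS.ncard_setOf_le hα ht, hsum, abs_le]
  push_cast
  constructor <;> linarith

end IsSEnum

theorem exists_abs_sub_mul_le_of_le_shift {f g : ℝ → ℝ} {L K D₁ D₂ : ℝ} (hL : 0 ≤ L)
    (hD₁ : 0 ≤ D₁) (hD₂ : 0 ≤ D₂) (hf : ∀ t, 0 ≤ f t) (hfg : ∀ t, f t ≤ g (t + 1) + D₁)
    (hgf : ∀ t, g t ≤ f (t + 1) + D₂) (hg : ∀ t, 0 ≤ t → |g t - L * t| ≤ K) :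
    ∃ C, ∀ t, 0 ≤ t → |f t - L * t| ≤ C := by
  have hK : 0 ≤ K := (abs_nonneg _).trans (hg 0 le_rfl)
  refine ⟨L + K + D₁ + D₂, fun t ht => abs_le.mpr ⟨?_, ?_⟩⟩
  · obtain h1 | h1 := le_or_gt 1 t
    · have hg_lower := (abs_le.mp (hg (t - 1) (by linarith))).1
      have hgf_shift := hgf (t - 1)
      rw [sub_add_cancel] at hgf_shift
      nlinarith
    · nlinarith [hf t]
  · have hg_upper := (abs_le.mp (hg (t + 1) (by linarith))).2
    nlinarith [hfg t]

theorem stmt16_general {k : ℕ} (α : Fin k → ℝ) (hα : ∀ i, 0 < α i)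
    (S A : ℕ → ℝ) (hS : IsSEnum α S)
    (F : ℕ → ℕ) (hclose : CloseSeq S A F) (hab : AlmostBij F) :
    ∃ C : ℝ, ∀ t : ℝ, 0 ≤ t →
      |(Nat.card {j : ℕ | A j ≤ t} : ℝ) - (2 * ∑ i, (α i)⁻¹) * t| ≤ C := by
  have hSfin := hS.finite_setOf_le hα
  obtain ⟨D₁, hD₁⟩ := hclose.exists_ncard_target_le hab hSfin
  obtain ⟨D₂, hD₂⟩ := hclose.exists_ncard_source_le hab hSfin
  have hL : 0 ≤ 2 * ∑ i, (α i)⁻¹ := by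
    have := Finset.sum_nonneg fun i (_ : i ∈ Finset.univ) => (inv_pos.mpr (hα i)).le
    positivity
  simp only [Nat.card_coe_set_eq]
  exact exists_abs_sub_mul_le_of_le_shift hL (Nat.cast_nonneg D₁) (Nat.cast_nonneg D₂)
    (fun _ => Nat.cast_nonneg _) (fun t => by exact_mod_cast hD₁ t)
    (fun t => by exact_mod_cast hD₂ t) fun t ht => hS.abs_ncard_setOf_le_sub_le hα ht

theorem stmt16 {k : ℕ} (α : Fin k → ℝ) (hα : ∀ i, 0 < α i)
    (S A : ℕ → ℝ) (hS : IsSEnum α S) (hA : Monotone A)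
    (F : ℕ → ℕ) (hclose : CloseSeq S A F) (hab : AlmostBij F) :
    ∃ C : ℝ, ∀ t : ℝ, 0 ≤ t →
      |(Nat.card {j : ℕ | A j ≤ t} : ℝ) - (2 * ∑ i, (α i)⁻¹) * t| ≤ C :=
  stmt16_general α hα S A hS F hclose hab
end
end

section
/- Let R be a finite multiset of positive reals, and let A be the increasing enumeration of a countable multiset with a close almost-bijection F : S(R) → A. Then for every ε > 0, all but finitely many elements of A lie within ε of the set {0} ∪ ⋃_{α∈R} αℕ. -/
open Filter Topology

noncomputable section

def svalSet {k : ℕ} (α : Fin k → ℝ) : Set ℝ :=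
  {0} ∪ ⋃ i, Set.range fun n : ℕ+ => (n : ℝ) * α i

theorem sval_mem_svalSet {k : ℕ} (α : Fin k → ℝ) (x : Fin k ⊕ (Fin k × ℕ+ × Fin 2)) :
    sval α x ∈ svalSet α := by
  rcases x with i | ⟨i, n, _⟩
  · exact Or.inl rfl
  · exact Or.inr (Set.mem_iUnion.mpr ⟨i, n, rfl⟩)

theorem IsSEnum.mem_svalSet {k : ℕ} {α : Fin k → ℝ} {S : ℕ → ℝ} (hS : IsSEnum α S) (j : ℕ) :
    S j ∈ svalSet α := by
  obtain ⟨-, e, he⟩ := hS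
  exact he j ▸ sval_mem_svalSet α (e j)

theorem AlmostBij.finite_compl_range {F : ℕ → ℕ} (hF : AlmostBij F) :
    (Set.range F)ᶜ.Finite :=
  hF.subset fun _ hn hex => hn (hex.exists.imp fun _ hj => hj)

theorem CloseSeq.finite_setOf_not_near {S A : ℕ → ℝ} {F : ℕ → ℕ} {X : Set ℝ}
    (hSX : ∀ j, S j ∈ X) (hclose : CloseSeq S A F) (hF : (Set.range F)ᶜ.Finite)
    {ε : ℝ} (hε : 0 < ε) :
    {n : ℕ | ¬ ∃ x ∈ X, |A n - x| < ε}.Finite := by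
  refine (hF.union ((hclose ε hε).image F)).subset fun n hn => ?_
  by_contra hcover
  simp only [Set.mem_union, Set.mem_compl_iff, not_or, not_not] at hcover
  obtain ⟨⟨j, rfl⟩, hfar⟩ := hcover
  exact hn ⟨S j, hSX j, not_le.mp fun hj => hfar ⟨j, hj, rfl⟩⟩

theorem stmt18_general {k : ℕ} (α : Fin k → ℝ)
    (S A : ℕ → ℝ) (hS : IsSEnum α S)
    (F : ℕ → ℕ) (hclose : CloseSeq S A F) (hab : AlmostBij F) :
    ∀ ε > 0, {j : ℕ | ¬ ∃ x ∈ (({0} : Set ℝ) ∪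
        ⋃ i, Set.range fun n : ℕ+ => (n : ℝ) * α i), |A j - x| < ε}.Finite :=
  fun _ hε => hclose.finite_setOf_not_near hS.mem_svalSet hab.finite_compl_range hε

theorem stmt18 {k : ℕ} (α : Fin k → ℝ) (hα : ∀ i, 0 < α i)
    (S A : ℕ → ℝ) (hS : IsSEnum α S)
    (F : ℕ → ℕ) (hclose : CloseSeq S A F) (hab : AlmostBij F) :
    ∀ ε > 0, {j : ℕ | ¬ ∃ x ∈ (({0} : Set ℝ) ∪
        ⋃ i, Set.range fun n : ℕ+ => (n : ℝ) * α i), |A j - x| < ε}.Finite :=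
  stmt18_general α S A hS F hclose hab
end
end

section
/- Let R be a finite multiset of positive reals with min R = L, and let A be a monotone increasing sequence with A_j = S(R)_j + o(1). Then for every ε > 0, there exists J such that for all j ≥ J, any interval of length L + ε contained in [A_J, ∞) contains at least one element of A; consequently the multiplicity of any value in A is eventually at most 2|R|. -/
/-!
Every multiple `n L` with `n ≥ 1` is a value of `S(R)`, so each interval `[y, y + L]` with
`y ≥ 0` meets `S(R)`; as `A j - S(R)_j → 0`, widening it by `ε / 2` on each side gives the gap
bound for `A`. Late indices with a common `A`-value have `S(R)`-values less than `L` apart,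
while distinct multiples within one copy of `α ℕ⁺` are `α ≥ L` apart; so these indices lie in
distinct copies, of which there are `2|R|`.
-/

open Filter Topology

noncomputable section

open Set

lemma exists_pnat_mul_mem_Icc {L : ℝ} (hL : 0 < L) {y : ℝ} (hy : 0 ≤ y) :
    ∃ n : ℕ+, (n : ℝ) * L ∈ Icc y (y + L) := by
  refine ⟨⌊y / L⌋₊.succPNat, ?_, ?_⟩
  · have := (div_lt_iff₀ hL).mp (Nat.lt_floor_add_one (y / L))
    simp only [Nat.succPNat_coe, Nat.cast_succ]
    linarith
  · have := (le_div_iff₀ hL).mp (Nat.floor_le (div_nonneg hy hL.le))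
    simp only [Nat.succPNat_coe, Nat.cast_succ]
    linarith

lemma eventually_abs_lt_of_tendsto_zero {f : ℕ → ℝ} (hf : Tendsto f atTop (𝓝 0))
    {δ : ℝ} (hδ : 0 < δ) : ∀ᶠ j in atTop, |f j| < δ := by
  simpa only [Real.dist_0_eq_abs] using Metric.tendsto_nhds.mp hf δ hδ

lemma exists_mem_Icc_of_tendsto_sub {S A : ℕ → ℝ} {L ε : ℝ} (hS : Monotone S)
    (hgap : ∀ y, 0 ≤ y → ∃ j, S j ∈ Icc y (y + L)) (hA : Tendsto A atTop atTop)
    (hconv : Tendsto (fun j => A j - S j) atTop (𝓝 0)) (hε : 0 < ε) :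
    ∃ J, ∀ x, A J ≤ x → ∃ j, A j ∈ Icc x (x + L + ε) := by
  obtain ⟨J₀, hJ₀⟩ := eventually_atTop.mp (eventually_abs_lt_of_tendsto_zero hconv (half_pos hε))
  obtain ⟨J, hJ⟩ := (hA.eventually_ge_atTop (max (S J₀ + ε / 2) 0)).exists
  refine ⟨J, fun x hx => ?_⟩
  obtain ⟨hxS, hx0⟩ := max_le_iff.mp (hJ.trans hx)
  obtain ⟨j, hj_lo, hj_hi⟩ := hgap (x + ε / 2) (by linarith)
  have hJ₀j : J₀ ≤ j := (hS.reflect_lt (by linarith : S J₀ < S j)).le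
  obtain ⟨h₁, h₂⟩ := abs_lt.mp (hJ₀ j hJ₀j)
  exact ⟨j, by linarith, by linarith⟩

lemma Nat.eq_of_abs_cast_sub_lt_one {a b : ℕ} (h : |(a : ℝ) - b| < 1) : a = b := by
  have h' : |(a : ℤ) - b| < 1 := by exact_mod_cast h
  obtain ⟨h₁, h₂⟩ := abs_lt.mp h'
  omega

variable {k : ℕ} {α : Fin k → ℝ}

/-- Which of the `2k` copies of the sets `α i ℕ⁺` an element lies in; the zeros get an arbitrary
label. -/
def copyIndex : Fin k ⊕ (Fin k × ℕ+ × Fin 2) → Fin k × Fin 2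
  | .inl i => (i, 0)
  | .inr (i, _, c) => (i, c)

lemma eq_of_copyIndex_eq {x y : Fin k × ℕ+ × Fin 2}
    (hxy : copyIndex (.inr x) = copyIndex (.inr y)) (hα : 0 < α x.1)
    (h : |sval α (.inr x) - sval α (.inr y)| < α x.1) : x = y := by
  obtain ⟨i, n, c⟩ := x
  obtain ⟨i', n', c'⟩ := y
  obtain ⟨rfl, rfl⟩ := Prod.mk.inj hxy
  simp only [sval, ← sub_mul, abs_mul, abs_of_pos hα, mul_lt_iff_lt_one_left hα] at h
  have hn : (n : ℕ) = n' := Nat.eq_of_abs_cast_sub_lt_one h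
  rw [PNat.coe_inj.mp hn]

namespace IsSEnum

variable {S : ℕ → ℝ}

lemma exists_eq_mul (hS : IsSEnum α S) (i : Fin k) (n : ℕ+) : ∃ j, S j = n * α i := by
  obtain ⟨-, e, he⟩ := hS
  exact ⟨e.symm (.inr (i, n, 0)), by rw [he, Equiv.apply_symm_apply]; rfl⟩

lemma exists_mem_Icc (hS : IsSEnum α S) {i : Fin k} (hi : 0 < α i) {y : ℝ} (hy : 0 ≤ y) :
    ∃ j, S j ∈ Icc y (y + α i) := by
  obtain ⟨n, hn⟩ := exists_pnat_mul_mem_Icc hi hy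
  obtain ⟨j, hj⟩ := hS.exists_eq_mul i n
  exact ⟨j, hj ▸ hn⟩

lemma tendsto_atTop (hS : IsSEnum α S) {i : Fin k} (hi : 0 < α i) :
    Tendsto S atTop atTop :=
  tendsto_atTop_atTop_of_monotone hS.1 fun b =>
    let ⟨j, hj⟩ := hS.exists_mem_Icc hi (le_max_right b 0)
    ⟨j, (le_max_left b 0).trans hj.1⟩

lemma finite_and_card_le (hS : IsSEnum α S) {L : ℝ} (hL : 0 < L) (hα : ∀ i, L ≤ α i)
    {T : Set ℕ} (hpos : ∀ j ∈ T, 0 < S j) (hdiam : ∀ j ∈ T, ∀ j' ∈ T, |S j - S j'| < L) :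
    T.Finite ∧ Nat.card T ≤ 2 * k := by
  obtain ⟨-, e, he⟩ := hS
  have hinr : ∀ j ∈ T, ∃ x, e j = .inr x := by
    intro j hj
    rcases hej : e j with i | x
    · have := hpos j hj
      rw [he, hej, sval] at this
      exact (lt_irrefl 0 this).elim
    · exact ⟨x, rfl⟩
  have hinj : InjOn (copyIndex ∘ e) T := by
    intro j hj j' hj' h
    obtain ⟨x, hx⟩ := hinr j hj
    obtain ⟨y, hy⟩ := hinr j' hj'
    have hclose : |sval α (.inr x) - sval α (.inr y)| < α x.1 := by
      rw [← hx, ← hy, ← he, ← he]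
      exact (hdiam j hj j' hj').trans_le (hα _)
    apply e.injective
    rw [hx, hy, eq_of_copyIndex_eq (by simpa [hx, hy] using h) (hL.trans_le (hα _)) hclose]
  have := Finite.of_injective _ hinj.injective
  refine ⟨T.toFinite, ?_⟩
  calc Nat.card T ≤ Nat.card (Fin k × Fin 2) := Nat.card_le_card_of_injective _ hinj.injective
    _ = 2 * k := by simp [mul_comm]

end IsSEnum

theorem stmt19_general {k : ℕ} (α : Fin k → ℝ) (L : ℝ) (hL : 0 < L)
    (hmin : ∀ i, L ≤ α i) (hmem : ∃ i, α i = L)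
    (S A : ℕ → ℝ) (hS : IsSEnum α S)
    (hconv : Tendsto (fun j => A j - S j) atTop (nhds 0)) :
    ∀ ε > 0,
      (∃ J : ℕ, ∀ x : ℝ, A J ≤ x → ∃ j : ℕ, A j ∈ Set.Icc x (x + L + ε)) ∧
      (∃ J : ℕ, ∀ v : ℝ, {j : ℕ | J ≤ j ∧ A j = v}.Finite ∧
        Nat.card {j : ℕ | J ≤ j ∧ A j = v} ≤ 2 * k) := by
  obtain ⟨i₀, hi₀⟩ := hmem
  have hα₀ : 0 < α i₀ := hi₀ ▸ hL
  have hS_top := hS.tendsto_atTop hα₀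
  have hA_top : Tendsto A atTop atTop := by simpa using hconv.add_atTop hS_top
  intro ε hε
  refine ⟨exists_mem_Icc_of_tendsto_sub hS.1 (fun y hy => hi₀ ▸ hS.exists_mem_Icc hα₀ hy)
    hA_top hconv hε, ?_⟩
  obtain ⟨J, hJ⟩ := eventually_atTop.mp ((hS_top.eventually_gt_atTop 0).and
    (eventually_abs_lt_of_tendsto_zero hconv (half_pos hL)))
  refine ⟨J, fun v => hS.finite_and_card_le hL hmin (fun j hj => (hJ j hj.1).1) ?_⟩
  rintro j ⟨hj, rfl⟩ j' ⟨hj', hv⟩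
  obtain ⟨h₁, h₂⟩ := abs_lt.mp (hJ j hj).2
  obtain ⟨h₃, h₄⟩ := abs_lt.mp (hJ j' hj').2
  exact abs_sub_lt_iff.mpr ⟨by linarith, by linarith⟩

theorem stmt19 {k : ℕ} (α : Fin k → ℝ) (L : ℝ) (hL : 0 < L)
    (hmin : ∀ i, L ≤ α i) (hmem : ∃ i, α i = L)
    (S A : ℕ → ℝ) (hS : IsSEnum α S) (hA : Monotone A)
    (hconv : Tendsto (fun j => A j - S j) atTop (nhds 0)) :
    ∀ ε > 0,
      (∃ J : ℕ, ∀ x : ℝ, A J ≤ x → ∃ j : ℕ, A j ∈ Set.Icc x (x + L + ε)) ∧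
      (∃ J : ℕ, ∀ v : ℝ, {j : ℕ | J ≤ j ∧ A j = v}.Finite ∧
        Nat.card {j : ℕ | J ≤ j ∧ A j = v} ≤ 2 * k) :=
  stmt19_general α L hL hmin hmem S A hS hconv
end
end
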